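/- arXiv:2307.00244 — 6 statements merged into one kernel-verified Lean document; each statement's English description precedes it below -/
import Mathlib

section
/- Define F(x) = Θ_q(x)² / (q x Θ_q(−x)) for x ∈ ℂ ∖ {0}. Then F is meromorphic on ℂ ∖ {0}, and for every x ≠ 0 with Θ_q(−x) ≠ 0 one has F(qx) = x · F(x); that is, F is a solution of the q-difference equation y(qx) = x y(x). -/
/-!
The coefficients of the Laurent series `Θ_q` have modulus `|q|^{-n(n-1)/2}`, so on every annulus
`r < |x| < R` the series is dominated by the summable `|q|^{-n(n-1)/2} max(R, r⁻¹)^{|n|}`; hence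
`Θ_q` is holomorphic on `ℂ ∖ {0}` and `F` is meromorphic there. Shifting the summation index
gives `Θ_q(qx) = -qx Θ_q(x)`, and applying this at `x` and `-x` turns `F(qx)` into `x F(x)`.
-/

/-- The Jacobi `q`-theta function `Θ_q(x) = ∑_{n ∈ ℤ} (−1)ⁿ q^{−n(n−1)/2} xⁿ`. -/
noncomputable def thetaQ (q x : ℂ) : ℂ :=
  ∑' n : ℤ, (-1 : ℂ) ^ n * q ^ (-(n * (n - 1) / 2)) * x ^ n

open Topology

theorem mul_sub_one_ediv_two_add_one (n : ℤ) :
    (n + 1) * (n + 1 - 1) / 2 = n * (n - 1) / 2 + n := by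
  rw [show (n + 1) * (n + 1 - 1) = n * (n - 1) + n * 2 by ring,
    Int.add_mul_ediv_right _ _ two_ne_zero]

theorem summable_zpow_mul_pow_of_le_sub {A M : ℝ} (hA : 1 < A) (hM : 0 ≤ M) {e : ℕ → ℤ}
    (he : ∀ n : ℕ, e (n + 1) ≤ e n - n) :
    Summable fun n : ℕ => A ^ e n * M ^ n := by
  -- ratio test: consecutive terms have ratio at most `A⁻¹ ^ n * M`, which tends to `0`
  have hA₀ : A ≠ 0 := by positivity
  have hsmall : ∀ᶠ n : ℕ in Filter.atTop, A⁻¹ ^ n * M ≤ 1 / 2 := by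
    have := (tendsto_pow_atTop_nhds_zero_of_lt_one (by positivity)
      (inv_lt_one_of_one_lt₀ hA)).mul_const M
    rw [zero_mul] at this
    exact this.eventually (eventually_le_nhds one_half_pos)
  refine summable_of_ratio_norm_eventually_le one_half_lt_one ?_
  filter_upwards [hsmall] with n hn
  rw [Real.norm_of_nonneg (by positivity), Real.norm_of_nonneg (by positivity)]
  calc A ^ e (n + 1) * M ^ (n + 1) ≤ A ^ (e n - n) * M ^ (n + 1) := by
        gcongr
        · exact hA.le
        · exact he n
    _ = A ^ e n * M ^ n * (A⁻¹ ^ n * M) := by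
        rw [zpow_sub₀ hA₀, zpow_natCast, inv_pow]; ring
    _ ≤ 1 / 2 * (A ^ e n * M ^ n) := by
        rw [mul_comm (1 / 2)]; gcongr

theorem summable_thetaQ_majorant {A M : ℝ} (hA : 1 < A) (hM : 0 ≤ M) :
    Summable fun n : ℤ => A ^ (-(n * (n - 1) / 2)) * M ^ n.natAbs := by
  apply Summable.of_nat_of_neg
  · refine (summable_zpow_mul_pow_of_le_sub (e := fun n : ℕ => -((n : ℤ) * (n - 1) / 2)) hA hM
      fun n => ?_).congr fun n => by simp
    push_cast
    rw [mul_sub_one_ediv_two_add_one]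
    omega
  · refine (summable_zpow_mul_pow_of_le_sub (e := fun n : ℕ => -(-(n : ℤ) * (-n - 1) / 2)) hA hM
      fun n => ?_).congr fun n => by simp
    push_cast
    rw [show -((n : ℤ) + 1) * (-(n + 1) - 1) = (n + 1 + 1) * (n + 1 + 1 - 1) by ring,
      show -(n : ℤ) * (-n - 1) = (n + 1) * (n + 1 - 1) by ring,
      mul_sub_one_ediv_two_add_one, mul_sub_one_ediv_two_add_one]
    omega

theorem zpow_le_pow_natAbs {a M : ℝ} (ha : 0 < a) (h : a ≤ M) (h' : a⁻¹ ≤ M) (n : ℤ) :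
    a ^ n ≤ M ^ n.natAbs := by
  obtain ⟨m, rfl | rfl⟩ := Int.eq_nat_or_neg n
  · rw [zpow_natCast, Int.natAbs_natCast]; gcongr
  · rw [zpow_neg, zpow_natCast, ← inv_pow, Int.natAbs_neg, Int.natAbs_natCast]; gcongr

theorem differentiableOn_thetaQ_annulus {q : ℂ} (hq : 1 < ‖q‖) {r R : ℝ} (hr : 0 < r) :
    DifferentiableOn ℂ (thetaQ q) (norm ⁻¹' Set.Ioo r R) := by
  refine Complex.differentiableOn_tsum_of_summable_norm
    (summable_thetaQ_majorant hq (le_max_of_le_right (inv_pos.2 hr).le : 0 ≤ max R r⁻¹))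
    (fun n x hx => ?_) (isOpen_Ioo.preimage continuous_norm) fun n x hx => ?_
  · have hx₀ : x ≠ 0 := norm_pos_iff.1 (hr.trans hx.1)
    exact ((differentiableAt_zpow.2 (Or.inl hx₀)).const_mul _).differentiableWithinAt
  · have hx₀ : 0 < ‖x‖ := hr.trans hx.1
    rw [norm_mul, norm_mul, norm_zpow, norm_zpow, norm_neg, norm_one, one_zpow, one_mul, norm_zpow]
    gcongr
    exact zpow_le_pow_natAbs hx₀ (le_max_of_le_left hx.2.le)
      (le_max_of_le_right (inv_anti₀ hr hx.1.le)) n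

theorem differentiableOn_thetaQ {q : ℂ} (hq : 1 < ‖q‖) :
    DifferentiableOn ℂ (thetaQ q) {x | x ≠ 0} := by
  intro x hx
  have hx₀ : 0 < ‖x‖ := norm_pos_iff.2 hx
  have hnhds : norm ⁻¹' Set.Ioo (‖x‖ / 2) (2 * ‖x‖) ∈ 𝓝 x :=
    continuous_norm.continuousAt.preimage_mem_nhds
      (Ioo_mem_nhds (half_lt_self hx₀) (lt_two_mul_self hx₀))
  exact ((differentiableOn_thetaQ_annulus hq (half_pos hx₀)).differentiableAt
    hnhds).differentiableWithinAt

theorem thetaQ_q_mul {q x : ℂ} (hq : q ≠ 0) (hx : x ≠ 0) :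
    thetaQ q (q * x) = -(q * x) * thetaQ q x := by
  rw [thetaQ, thetaQ, ← tsum_mul_left, ← (Equiv.addRight (1 : ℤ)).tsum_eq]
  congr 1 with n
  rw [Equiv.coe_addRight, mul_sub_one_ediv_two_add_one, neg_add, zpow_add₀ hq,
    zpow_add₀ (neg_ne_zero.2 one_ne_zero), zpow_add₀ (mul_ne_zero hq hx), mul_zpow, zpow_neg q n]
  have := zpow_ne_zero n hq
  field_simp

/-- The function `F(x) = Θ_q(x)² / (q x Θ_q(−x))` is meromorphic on
`ℂ ∖ {0}` and satisfies `F(qx) = x F(x)` whenever `x ≠ 0` and `Θ_q(−x) ≠ 0`. -/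
theorem meromorphic_solution_y_qx_eq_x_y (q : ℂ) (hq : 1 < ‖q‖) :
    MeromorphicOn (fun x : ℂ => thetaQ q x ^ 2 / (q * x * thetaQ q (-x))) {x : ℂ | x ≠ 0} ∧
      ∀ x : ℂ, x ≠ 0 → thetaQ q (-x) ≠ 0 →
        thetaQ q (q * x) ^ 2 / (q * (q * x) * thetaQ q (-(q * x)))
          = x * (thetaQ q x ^ 2 / (q * x * thetaQ q (-x))) := by
  have hq₀ : q ≠ 0 := norm_pos_iff.1 (one_pos.trans hq)
  have hθ : AnalyticOnNhd ℂ (thetaQ q) {x | x ≠ 0} :=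
    (differentiableOn_thetaQ hq).analyticOnNhd isOpen_ne
  refine ⟨?_, fun x hx hθx => ?_⟩
  · have hθneg : AnalyticOnNhd ℂ (fun x => thetaQ q (-x)) {x | x ≠ 0} :=
      hθ.comp analyticOnNhd_id.neg fun x hx => neg_ne_zero.2 hx
    exact (hθ.pow 2).meromorphicOn.div
      ((analyticOnNhd_const.mul analyticOnNhd_id).meromorphicOn.mul hθneg.meromorphicOn)
  · rw [thetaQ_q_mul hq₀ hx, ← mul_neg, thetaQ_q_mul hq₀ (neg_ne_zero.2 hx)]
    field_simp
end

section
/- Let a ∈ ℂ ∖ {0}. The zeros of the entire function f_a are exactly the points a q^n with n an integer ≥ 1: for z ∈ ℂ one has f_a(z) = 0 if and only if z = a q^n for some integer n ≥ 1. Moreover every such zero is simple, i.e. the complex derivative satisfies f_a'(a q^n) ≠ 0 for every integer n ≥ 1. -/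
/-- The `q`-Pochhammer symbol `(q;q)_n = ∏_{k=1}^n (1 − qᵏ)`. -/
noncomputable def qPoch (q : ℂ) (n : ℕ) : ℂ :=
  ∏ k ∈ Finset.range n, (1 - q ^ (k + 1))

/-- The entire function `f_a(x) = ∑_{n≥0} (x/a)ⁿ/(q;q)_n`. -/
noncomputable def fA (q a x : ℂ) : ℂ :=
  ∑' n : ℕ, (x / a) ^ n / qPoch q n

/-
Iterating the functional equation `f(qx) = (1 - x/a) f(x)` gives
`f(qᴺ x) = ∏_{k<N} (1 - qᵏ x / a) · f(x)`. The factor `k = 0` vanishes at `x = a`, so every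
`a qⁿ` with `n ≥ 1` is a zero. Conversely, if `f(z) = 0`, pick `N` with `f(z / qᴺ) ≠ 0`, possible
because `z / qᴺ → 0` and `f(0) = 1`; then one of the factors vanishes at `x = z / qᴺ`.
Differentiating the functional equation gives `q f'(qx) = -f(x)/a + (1 - x/a) f'(x)`, hence
`q f'(aq) = -f(a)/a ≠ 0` and `q f'(aqⁿ⁺¹) = (1 - qⁿ) f'(aqⁿ)`, so all zeros are simple.
-/

open Filter Topology FormalMultilinearSeries

lemma pow_ne_one_of_one_lt_norm {𝕜 : Type*} [NormedDivisionRing 𝕜] {x : 𝕜} (hx : 1 < ‖x‖)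
    {n : ℕ} (hn : n ≠ 0) : x ^ n ≠ 1 := by
  intro h
  have := one_lt_pow₀ hx hn
  rw [← norm_pow, h, norm_one] at this
  exact this.false

lemma tendsto_norm_one_sub_pow_atTop {𝕜 : Type*} [NormedDivisionRing 𝕜] {x : 𝕜}
    (hx : 1 < ‖x‖) : Tendsto (fun n : ℕ => ‖1 - x ^ n‖) atTop atTop := by
  refine tendsto_atTop_mono (fun n => ?_)
    (tendsto_atTop_add_const_right atTop (-1) (tendsto_pow_atTop_atTop_of_one_lt hx))
  calc ‖x‖ ^ n + -1 = ‖x ^ n‖ - ‖(1 : 𝕜)‖ := by rw [norm_pow, norm_one, sub_eq_add_neg]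
    _ ≤ ‖x ^ n - 1‖ := norm_sub_norm_le _ _
    _ = ‖1 - x ^ n‖ := norm_sub_rev _ _

section qPoch

variable {q : ℂ}

lemma qPoch_succ (n : ℕ) : qPoch q (n + 1) = qPoch q n * (1 - q ^ (n + 1)) :=
  Finset.prod_range_succ _ _

lemma qPoch_ne_zero (hq : 1 < ‖q‖) (n : ℕ) : qPoch q n ≠ 0 :=
  Finset.prod_ne_zero_iff.2 fun k _ =>
    sub_ne_zero.2 (pow_ne_one_of_one_lt_norm hq k.succ_ne_zero).symm

noncomputable def qExpSeries (q : ℂ) : FormalMultilinearSeries ℂ ℂ ℂ :=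
  ofScalars ℂ fun n => (qPoch q n)⁻¹

lemma radius_qExpSeries (hq : 1 < ‖q‖) : (qExpSeries q).radius = ⊤ := by
  refine ofScalars_radius_eq_top_of_tendsto _ _
    (.of_forall fun n => inv_ne_zero (qPoch_ne_zero hq n)) ?_
  have hratio : ∀ n, ‖(qPoch q (n + 1))⁻¹‖ / ‖(qPoch q n)⁻¹‖ = ‖1 - q ^ (n + 1)‖⁻¹ := by
    intro n
    have := norm_ne_zero_iff.2 (qPoch_ne_zero hq n)
    rw [qPoch_succ, mul_inv, norm_mul, norm_inv, norm_inv]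
    field_simp
  exact ((tendsto_norm_one_sub_pow_atTop hq).comp (tendsto_add_atTop_nat 1)).inv_tendsto_atTop
    |>.congr fun n => (hratio n).symm

lemma qExpSeries_apply (z : ℂ) (n : ℕ) :
    qExpSeries q n (fun _ => z) = z ^ n / qPoch q n := by
  rw [qExpSeries, ofScalars_apply_eq, smul_eq_mul, div_eq_inv_mul]

lemma summable_pow_div_qPoch (hq : 1 < ‖q‖) (z : ℂ) :
    Summable fun n => z ^ n / qPoch q n := by
  simpa only [qExpSeries_apply] using
    (qExpSeries q).summable (x := z) (by simp [radius_qExpSeries hq])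

/-- The telescoping `(1 - qⁿ⁺¹) / (q;q)ₙ₊₁ = 1 / (q;q)ₙ` turns `∑ (zⁿ - (qz)ⁿ) / (q;q)ₙ` into
`z ∑ zⁿ / (q;q)ₙ`. -/
lemma tsum_mul_pow_div_qPoch (hq : 1 < ‖q‖) (z : ℂ) :
    ∑' n, (q * z) ^ n / qPoch q n = (1 - z) * ∑' n, z ^ n / qPoch q n := by
  have hs := summable_pow_div_qPoch hq z
  have hs' := summable_pow_div_qPoch hq (q * z)
  have hshift : ∀ n, z ^ (n + 1) / qPoch q (n + 1) - (q * z) ^ (n + 1) / qPoch q (n + 1)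
      = z * (z ^ n / qPoch q n) := by
    intro n
    have := qPoch_ne_zero hq n
    have := sub_ne_zero.2 (pow_ne_one_of_one_lt_norm hq n.succ_ne_zero).symm
    rw [qPoch_succ]
    field_simp
    ring
  have hdiff : ∑' n, z ^ n / qPoch q n - ∑' n, (q * z) ^ n / qPoch q n
      = z * ∑' n, z ^ n / qPoch q n := by
    rw [← hs.tsum_sub hs', (hs.sub hs').tsum_eq_zero_add, tsum_congr hshift, tsum_mul_left]
    simp
  linear_combination -hdiff

end qPoch

section fA

variable {q : ℂ} (a : ℂ)

lemma fA_eq_sum_qExpSeries (x : ℂ) : fA q a x = (qExpSeries q).sum (x / a) :=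
  tsum_congr fun n => (qExpSeries_apply _ n).symm

lemma differentiable_fA (hq : 1 < ‖q‖) : Differentiable ℂ (fA q a) := by
  have hp : HasFPowerSeriesOnBall (qExpSeries q).sum (qExpSeries q) 0 ⊤ :=
    radius_qExpSeries hq ▸ (qExpSeries q).hasFPowerSeriesOnBall (by simp [radius_qExpSeries hq])
  intro x
  rw [funext (fA_eq_sum_qExpSeries a)]
  exact (hp.analyticAt_of_mem (by simp)).differentiableAt.comp x
    (differentiableAt_id.div_const a)

lemma fA_zero : fA q a 0 = 1 := by
  rw [fA, tsum_eq_single 0 fun n hn => by simp [hn]]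
  simp [qPoch]

lemma fA_mul_q (hq : 1 < ‖q‖) (x : ℂ) : fA q a (q * x) = (1 - x / a) * fA q a x := by
  rw [fA, fA, mul_div_assoc]
  exact tsum_mul_pow_div_qPoch hq (x / a)

lemma fA_pow_mul (hq : 1 < ‖q‖) (N : ℕ) (x : ℂ) :
    fA q a (q ^ N * x) = (∏ k ∈ Finset.range N, (1 - q ^ k * x / a)) * fA q a x := by
  induction N with
  | zero => simp
  | succ N ih =>
    rw [pow_succ', mul_assoc, fA_mul_q a hq, ih, Finset.prod_range_succ]
    ring

lemma mul_deriv_fA_mul_q (hq : 1 < ‖q‖) (x : ℂ) :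
    q * deriv (fA q a) (q * x) = (1 - x / a) * deriv (fA q a) x - fA q a x / a := by
  have hf := differentiable_fA a hq
  have h := congrArg (deriv · x) (funext (fA_mul_q a hq))
  rw [deriv_comp_mul_left, deriv_fun_mul (by fun_prop) (hf x)] at h
  simp only [smul_eq_mul, deriv_const_sub, deriv_div_const, deriv_id''] at h
  linear_combination h

variable {a}

lemma fA_mul_pow_eq_zero (hq : 1 < ‖q‖) (ha : a ≠ 0) {n : ℕ} (hn : 1 ≤ n) :
    fA q a (a * q ^ n) = 0 := by
  rw [mul_comm, fA_pow_mul a hq, Finset.prod_eq_zero (Finset.mem_range.2 hn) (by simp [ha]),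
    zero_mul]

lemma exists_eq_mul_pow_of_fA_eq_zero (hq : 1 < ‖q‖) {z : ℂ} (hz : fA q a z = 0) :
    ∃ n, 1 ≤ n ∧ z = a * q ^ n := by
  have hq0 : q ≠ 0 := norm_pos_iff.1 (one_pos.trans hq)
  have hlim : Tendsto (fun N : ℕ => z / q ^ N) atTop (𝓝 0) := by
    have := (tendsto_pow_atTop_nhds_zero_of_norm_lt_one
      (by rw [norm_inv]; exact inv_lt_one_of_one_lt₀ hq)).const_mul z
    rw [mul_zero] at this
    exact this.congr fun N => by rw [inv_pow, div_eq_mul_inv]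
  have hfA_lim := ((differentiable_fA a hq).continuous.tendsto 0).comp hlim
  rw [fA_zero] at hfA_lim
  obtain ⟨N, hN⟩ := (hfA_lim.eventually_ne one_ne_zero).exists
  have hprod := fA_pow_mul a hq N (z / q ^ N)
  rw [mul_div_cancel₀ z (pow_ne_zero N hq0), hz, eq_comm, mul_eq_zero] at hprod
  obtain ⟨k, hk, hfactor⟩ := Finset.prod_eq_zero_iff.1 (hprod.resolve_right hN)
  rw [Finset.mem_range] at hk
  refine ⟨N - k, by omega, ?_⟩
  have ha : a ≠ 0 := by rintro rfl; simp at hfactor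
  rw [pow_sub₀ q hq0 hk.le]
  field_simp at hfactor ⊢
  linear_combination -hfactor

lemma fA_eq_zero_iff (hq : 1 < ‖q‖) (ha : a ≠ 0) (z : ℂ) :
    fA q a z = 0 ↔ ∃ n, 1 ≤ n ∧ z = a * q ^ n :=
  ⟨exists_eq_mul_pow_of_fA_eq_zero hq, fun ⟨_, hn, hz⟩ => hz ▸ fA_mul_pow_eq_zero hq ha hn⟩

lemma fA_self_ne_zero (hq : 1 < ‖q‖) (ha : a ≠ 0) : fA q a a ≠ 0 := by
  rw [Ne, fA_eq_zero_iff hq ha]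
  rintro ⟨n, hn, h⟩
  exact pow_ne_one_of_one_lt_norm hq (n := n) (by omega)
    (mul_left_cancel₀ ha (h.symm.trans (mul_one a).symm))

lemma deriv_fA_mul_pow_ne_zero (hq : 1 < ‖q‖) (ha : a ≠ 0) {n : ℕ} (hn : 1 ≤ n) :
    deriv (fA q a) (a * q ^ n) ≠ 0 := by
  induction n, hn using Nat.le_induction with
  | base =>
    intro h0
    have h := mul_deriv_fA_mul_q a hq a
    rw [show q * a = a * q ^ 1 by ring, h0, div_self ha, sub_self, zero_mul, zero_sub, mul_zero,
      eq_comm, neg_eq_zero, div_eq_zero_iff] at h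
    exact fA_self_ne_zero hq ha (h.resolve_right ha)
  | succ n hn ih =>
    intro h0
    have h := mul_deriv_fA_mul_q a hq (a * q ^ n)
    rw [show q * (a * q ^ n) = a * q ^ (n + 1) by ring, h0, fA_mul_pow_eq_zero hq ha hn,
      mul_div_cancel_left₀ _ ha, zero_div, sub_zero, mul_zero, eq_comm] at h
    exact mul_ne_zero (sub_ne_zero.2 (pow_ne_one_of_one_lt_norm hq (by omega)).symm) ih h

end fA

/-- For `a ≠ 0`, the zeros of `f_a` are exactly the points `a qⁿ`
with `n ≥ 1`, and each of these zeros is simple. -/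
theorem fA_zeros (q : ℂ) (hq : 1 < ‖q‖) (a : ℂ) (ha : a ≠ 0) :
    (∀ z : ℂ, fA q a z = 0 ↔ ∃ n : ℕ, 1 ≤ n ∧ z = a * q ^ n) ∧
      ∀ n : ℕ, 1 ≤ n → deriv (fA q a) (a * q ^ n) ≠ 0 :=
  ⟨fA_eq_zero_iff hq ha, fun _ => deriv_fA_mul_pow_ne_zero hq ha⟩
end

section
/- Let g be an entire function with g(0) = 0, and let (g_n)_{n≥1} be its Taylor coefficients at 0, so that g(x) = ∑_{n≥1} g_n x^n for all x ∈ ℂ. Then the power series G_g(x) = ∑_{n≥1} (g_n/(q^n − 1)) x^n converges for every x ∈ ℂ, G_g is entire, and G_g(qx) = g(x) + G_g(x) for all x ∈ ℂ. Consequently the entire, nowhere vanishing function e^{G_g(x)} satisfies e^{G_g(qx)} = e^{g(x)} e^{G_g(x)} for all x ∈ ℂ, i.e. it is an entire zero-free solution of the q-difference equation y(qx) = e^{g(x)} y(x). -/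
/-!
For `n ≥ 1` we have `‖qⁿ - 1‖ ≥ ‖q‖ - 1 > 0`, so the coefficients `gₙ / (qⁿ - 1)` are dominated
by `(‖q‖ - 1)⁻¹ ‖gₙ‖`. A power series converging everywhere converges absolutely everywhere,
hence so does `G_g`, which is therefore entire. Multiplying its coefficients by `qⁿ - 1` gives
back `gₙ`, which is the functional equation `G_g(qx) - G_g(x) = g(x)`; exponentiating it gives the
last claim.
-/

open FormalMultilinearSeries

section PowerSeries

variable {𝕜 : Type*} [NontriviallyNormedField 𝕜] {a c : ℕ → 𝕜}

theorem ofScalars_radius_eq_top_of_summable (hc : ∀ x : 𝕜, Summable fun n => c n * x ^ n) :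
    (ofScalars 𝕜 c).radius = ⊤ := by
  refine ENNReal.eq_top_of_forall_nnreal_le fun r => ?_
  obtain ⟨x, hx⟩ := NormedField.exists_lt_norm 𝕜 r
  calc (r : ENNReal) ≤ ‖x‖₊ := by exact_mod_cast hx.le
    _ ≤ (ofScalars 𝕜 c).radius := by
      refine (ofScalars 𝕜 c).le_radius_of_tendsto (l := 0) ?_
      simpa [ofScalars_norm] using (hc x).tendsto_atTop_zero.norm

theorem summable_norm_mul_pow_of_summable (ha : ∀ x : 𝕜, Summable fun n => a n * x ^ n) (x : 𝕜) :
    Summable fun n => ‖a n * x ^ n‖ := by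
  have hx : x ∈ Metric.eball 0 (ofScalars 𝕜 a).radius := by
    simp [ofScalars_radius_eq_top_of_summable ha]
  simpa [ofScalars_apply_eq, mul_comm] using (ofScalars 𝕜 a).summable_norm_apply hx

theorem summable_mul_pow_of_norm_le [CompleteSpace 𝕜] {C : ℝ} (h : ∀ n, ‖c n‖ ≤ C * ‖a n‖)
    (ha : ∀ x : 𝕜, Summable fun n => a n * x ^ n) (x : 𝕜) :
    Summable fun n => c n * x ^ n :=
  ((summable_norm_mul_pow_of_summable ha x).mul_left C).of_norm_bounded fun n => by
    rw [norm_mul, norm_mul, ← mul_assoc]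
    exact mul_le_mul_of_nonneg_right (h n) (norm_nonneg _)

theorem analyticOnNhd_tsum_mul_pow [CompleteSpace 𝕜] (hc : ∀ x : 𝕜, Summable fun n => c n * x ^ n) :
    AnalyticOnNhd 𝕜 (fun x => ∑' n, c n * x ^ n) Set.univ := by
  have hrad := ofScalars_radius_eq_top_of_summable hc
  have hsum := (ofScalars 𝕜 c).hasFPowerSeriesOnBall (by simp [hrad])
  have hsum_eq : (ofScalars 𝕜 c).sum = fun x => ∑' n, c n * x ^ n := ofScalarsSum_eq_tsum c
  rw [hrad, hsum_eq] at hsum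
  exact fun x _ => hsum.analyticOnNhd x (by simp)

theorem hasSum_mul_pow_sub_one_mul_pow {q x : 𝕜} (hqx : Summable fun n => c n * (q * x) ^ n)
    (hx : Summable fun n => c n * x ^ n) :
    HasSum (fun n => c n * (q ^ n - 1) * x ^ n)
      ((∑' n, c n * (q * x) ^ n) - ∑' n, c n * x ^ n) := by
  have hterm : (fun n => c n * (q * x) ^ n - c n * x ^ n) = fun n => c n * (q ^ n - 1) * x ^ n :=
    funext fun n => by ring
  simpa only [hterm] using hqx.hasSum.sub hx.hasSum

end PowerSeries

section PowSubOne

variable {𝕜 : Type*} [NormedField 𝕜] {q : 𝕜}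

theorem sub_one_le_norm_pow_sub_one (hq : 1 ≤ ‖q‖) {n : ℕ} (hn : n ≠ 0) :
    ‖q‖ - 1 ≤ ‖q ^ n - 1‖ := by
  have := norm_sub_norm_le (q ^ n) 1
  rw [norm_pow, norm_one] at this
  linarith [le_self_pow₀ hq hn]

theorem norm_div_pow_sub_one_le (hq : 1 < ‖q‖) (b : 𝕜) (n : ℕ) :
    ‖b / (q ^ n - 1)‖ ≤ (‖q‖ - 1)⁻¹ * ‖b‖ := by
  rcases eq_or_ne n 0 with rfl | hn
  -- `q ^ 0 - 1 = 0` and `b / 0 = 0`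
  · simpa using mul_nonneg (inv_nonneg.mpr (sub_nonneg.mpr hq.le)) (norm_nonneg b)
  rw [norm_div, div_eq_inv_mul]
  exact mul_le_mul_of_nonneg_right
    (inv_anti₀ (sub_pos.mpr hq) (sub_one_le_norm_pow_sub_one hq.le hn)) (norm_nonneg b)

theorem div_pow_sub_one_mul_pow_sub_one (hq : 1 < ‖q‖) {b : ℕ → 𝕜} (hb : b 0 = 0) (n : ℕ) :
    b n / (q ^ n - 1) * (q ^ n - 1) = b n := by
  rcases eq_or_ne n 0 with rfl | hn
  · simp [hb]
  refine div_mul_cancel₀ _ (norm_pos_iff.mp ?_)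
  linarith [sub_one_le_norm_pow_sub_one hq.le hn]

end PowSubOne

theorem exp_Gg_solution_general (q : ℂ) (hq : 1 < ‖q‖)
    (g : ℂ → ℂ)
    (gc : ℕ → ℂ) (hgc0 : gc 0 = 0)
    (hgsum : ∀ x : ℂ, HasSum (fun n : ℕ => gc n * x ^ n) (g x)) :
    (∀ x : ℂ, Summable (fun n : ℕ => gc n / (q ^ n - 1) * x ^ n)) ∧
      AnalyticOnNhd ℂ (fun x : ℂ => ∑' n : ℕ, gc n / (q ^ n - 1) * x ^ n) Set.univ ∧
      (∀ x : ℂ, (∑' n : ℕ, gc n / (q ^ n - 1) * (q * x) ^ n)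
          = g x + ∑' n : ℕ, gc n / (q ^ n - 1) * x ^ n) ∧
      (∀ x : ℂ, Complex.exp (∑' n : ℕ, gc n / (q ^ n - 1) * x ^ n) ≠ 0) ∧
      (∀ x : ℂ, Complex.exp (∑' n : ℕ, gc n / (q ^ n - 1) * (q * x) ^ n)
          = Complex.exp (g x) * Complex.exp (∑' n : ℕ, gc n / (q ^ n - 1) * x ^ n)) := by
  have hsumm : ∀ x : ℂ, Summable fun n => gc n / (q ^ n - 1) * x ^ n :=
    summable_mul_pow_of_norm_le (fun n => norm_div_pow_sub_one_le hq (gc n) n)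
      fun x => (hgsum x).summable
  have hfe : ∀ x : ℂ, (∑' n, gc n / (q ^ n - 1) * (q * x) ^ n)
      = g x + ∑' n, gc n / (q ^ n - 1) * x ^ n := by
    intro x
    have hdiff := hasSum_mul_pow_sub_one_mul_pow (hsumm (q * x)) (hsumm x)
    simp only [div_pow_sub_one_mul_pow_sub_one hq hgc0] at hdiff
    rw [(hgsum x).unique hdiff]
    ring
  refine ⟨hsumm, analyticOnNhd_tsum_mul_pow hsumm, hfe, fun _ => Complex.exp_ne_zero _, fun x => ?_⟩
  rw [hfe x, Complex.exp_add]

/-- If `g` is entire with `g(0) = 0` and Taylor coefficients `(gₙ)`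
(so `g(x) = ∑_{n≥1} gₙ xⁿ`), then `G_g(x) = ∑_{n≥1} (gₙ/(qⁿ−1)) xⁿ` converges
everywhere, defines an entire function with `G_g(qx) = g(x) + G_g(x)`, and
`exp(G_g)` is an entire zero-free solution of `y(qx) = e^{g(x)} y(x)`. -/
theorem exp_Gg_solution (q : ℂ) (hq : 1 < ‖q‖)
    (g : ℂ → ℂ) (hg : AnalyticOnNhd ℂ g Set.univ) (hg0 : g 0 = 0)
    (gc : ℕ → ℂ) (hgc0 : gc 0 = 0)
    (hgsum : ∀ x : ℂ, HasSum (fun n : ℕ => gc n * x ^ n) (g x)) :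
    (∀ x : ℂ, Summable (fun n : ℕ => gc n / (q ^ n - 1) * x ^ n)) ∧
      AnalyticOnNhd ℂ (fun x : ℂ => ∑' n : ℕ, gc n / (q ^ n - 1) * x ^ n) Set.univ ∧
      (∀ x : ℂ, (∑' n : ℕ, gc n / (q ^ n - 1) * (q * x) ^ n)
          = g x + ∑' n : ℕ, gc n / (q ^ n - 1) * x ^ n) ∧
      (∀ x : ℂ, Complex.exp (∑' n : ℕ, gc n / (q ^ n - 1) * x ^ n) ≠ 0) ∧
      (∀ x : ℂ, Complex.exp (∑' n : ℕ, gc n / (q ^ n - 1) * (q * x) ^ n)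
          = Complex.exp (g x) * Complex.exp (∑' n : ℕ, gc n / (q ^ n - 1) * x ^ n)) :=
  exp_Gg_solution_general q hq g gc hgc0 hgsum
end

section
/- Let h be an entire function, not identically zero, with h(0) = 1. Then there exists an entire function y with y(0) = 1 such that y(qx) = h(x) y(x) for all x ∈ ℂ, whose zeros are exactly the points a q^n with a a zero of h and n an integer ≥ 1: for every z ∈ ℂ, y(z) = 0 if and only if h(q^{−n} z) = 0 for some integer n ≥ 1; moreover, for every z ∈ ℂ the order of vanishing of y at z equals the sum over integers n ≥ 1 of the orders of vanishing of h at q^{−n} z (a sum with only finitely many nonzero terms). -/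
/-!
The solution is `y z = ∏_{n ≥ 1} h (q⁻ⁿ z)`. Since `h w - 1 = O(w)` at `0` and `q⁻ⁿ` decays
geometrically, the product converges locally uniformly, so `y` is entire, and shifting the index
gives `y (q x) = h x * y x`. Iterating, `y z = (∏_{n ≤ k} h (q⁻ⁿ z)) * y (q⁻ᵏ z)` for every `k`.
As `y (q⁻ᵏ z) → y 0 = 1`, the last factor does not vanish at `z` for large `k`, so the zeros and
orders of `y` at `z` are those of a finite product.
-/

open Filter Topology Metric Finset

theorem analyticOrderAt_finsetProd {𝕜 ι : Type*} [NontriviallyNormedField 𝕜] {f : ι → 𝕜 → 𝕜}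
    {z₀ : 𝕜} (s : Finset ι) (hf : ∀ i ∈ s, AnalyticAt 𝕜 (f i) z₀) :
    analyticOrderAt (∏ i ∈ s, f i) z₀ = ∑ i ∈ s, analyticOrderAt (f i) z₀ := by
  classical
  induction s using Finset.induction_on with
  | empty => simp [analyticOrderAt_eq_zero]
  | insert i s hi ih =>
    have hs : ∀ j ∈ s, AnalyticAt 𝕜 (f j) z₀ := fun j hj => hf j (mem_insert_of_mem hj)
    rw [prod_insert hi, sum_insert hi, analyticOrderAt_mul (hf i (mem_insert_self i s))
      (s.analyticAt_prod hs), ih hs]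

theorem differentiableOn_tprod_one_add {ι : Type*} {F : ι → ℂ → ℂ} {u : ι → ℝ} {U : Set ℂ}
    (hU : IsOpen U) (hu : Summable u) (hFu : ∀ᶠ i in cofinite, ∀ z ∈ U, ‖F i z‖ ≤ u i)
    (hF : ∀ i, DifferentiableOn ℂ (F i) U) :
    DifferentiableOn ℂ (fun z => ∏' i, (1 + F i z)) U :=
  (hu.hasProdLocallyUniformlyOn_one_add hU hFu fun i => (hF i).continuousOn).differentiableOn
    (Eventually.of_forall fun _ => DifferentiableOn.fun_finsetProd fun i _ =>
      (differentiableOn_const 1).add (hF i)) hU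

theorem exists_summable_norm_comp_pow_smul_le {𝕜 E F : Type*} [NormedField 𝕜]
    [NormedAddCommGroup E] [NormedSpace 𝕜 E] [NormedAddCommGroup F] {g : E → F}
    (hg : g =O[𝓝 0] fun w => w) {c : 𝕜} (hc : ‖c‖ < 1) (R : ℝ) :
    ∃ u : ℕ → ℝ, Summable u ∧ ∀ᶠ n in atTop, ∀ z ∈ ball (0 : E) R, ‖g (c ^ n • z)‖ ≤ u n := by
  obtain ⟨C, hC, hgC⟩ := hg.exists_pos
  obtain ⟨ε, hε, hgε⟩ := Metric.eventually_nhds_iff.mp hgC.bound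
  have hsmall : ∀ᶠ n in atTop, ‖c‖ ^ n * R < ε := by
    have hlim : Tendsto (fun n : ℕ => ‖c‖ ^ n * R) atTop (𝓝 0) := by
      simpa using (tendsto_pow_atTop_nhds_zero_of_lt_one (norm_nonneg c) hc).mul_const R
    exact hlim.eventually_lt_const hε
  refine ⟨fun n => C * (‖c‖ ^ n * R),
    (summable_geometric_of_lt_one (norm_nonneg c) hc).mul_right R |>.mul_left C, ?_⟩
  filter_upwards [hsmall] with n hn z hz
  have hzR : ‖c ^ n • z‖ ≤ ‖c‖ ^ n * R := by
    rw [norm_smul, norm_pow]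
    exact mul_le_mul_of_nonneg_left (mem_ball_zero_iff.mp hz).le (by positivity)
  calc ‖g (c ^ n • z)‖ ≤ C * ‖c ^ n • z‖ :=
        hgε (by rw [dist_zero_right]; exact hzR.trans_lt hn)
    _ ≤ C * (‖c‖ ^ n * R) := by gcongr

noncomputable def dilationProd (c : ℂ) (h : ℂ → ℂ) (z : ℂ) : ℂ :=
  ∏' n : ℕ, h (c ^ (n + 1) * z)

section dilationProd

variable {c : ℂ} {h : ℂ → ℂ}

theorem multipliable_dilationProd (hc : ‖c‖ < 1) (hh : DifferentiableAt ℂ h 0) (h0 : h 0 = 1)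
    (z : ℂ) : Multipliable fun n : ℕ => h (c ^ (n + 1) * z) := by
  have hg : (fun w => h w - 1) =O[𝓝 0] fun w => w := by simpa [h0] using hh.isBigO_sub
  obtain ⟨u, hu, hgu⟩ := exists_summable_norm_comp_pow_smul_le hg hc (‖z‖ + 1)
  have hsum : Summable fun n : ℕ => h (c ^ (n + 1) * z) - 1 := by
    refine (hu.comp_injective (add_left_injective 1)).of_norm_bounded_eventually_nat ?_
    filter_upwards [(tendsto_add_atTop_nat 1).eventually hgu] with n hn
    exact hn z (by simp)
  simpa using Complex.multipliable_one_add_of_summable hsum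

theorem dilationProd_eq_prod_mul (hc : ‖c‖ < 1) (hh : DifferentiableAt ℂ h 0) (h0 : h 0 = 1)
    (z : ℂ) (k : ℕ) :
    dilationProd c h z = (∏ n ∈ range k, h (c ^ (n + 1) * z)) * dilationProd c h (c ^ k * z) := by
  have htail := multipliable_dilationProd hc hh h0 (c ^ k * z)
  have e : ∀ n : ℕ, c ^ (n + 1) * (c ^ k * z) = c ^ (n + k + 1) * z := fun n => by ring
  simp only [e] at htail
  simp only [dilationProd, e]
  exact (htail.prod_mul_tprod_nat_mul').symm

theorem dilationProd_eq_mul (hc : ‖c‖ < 1) (hh : DifferentiableAt ℂ h 0) (h0 : h 0 = 1)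
    (z : ℂ) : dilationProd c h z = h (c * z) * dilationProd c h (c * z) := by
  simpa using dilationProd_eq_prod_mul hc hh h0 z 1

theorem dilationProd_zero_right (h0 : h 0 = 1) : dilationProd c h 0 = 1 := by
  simp [dilationProd, h0]

theorem dilationProd_eq_zero_of_apply_eq_zero {z : ℂ} {n : ℕ} (hn : h (c ^ (n + 1) * z) = 0) :
    dilationProd c h z = 0 :=
  tprod_of_exists_eq_zero ⟨n, hn⟩

theorem differentiable_dilationProd (hc : ‖c‖ < 1) (hh : Differentiable ℂ h) (h0 : h 0 = 1) :
    Differentiable ℂ (dilationProd c h) := by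
  have hg : (fun w => h w - 1) =O[𝓝 0] fun w => w := by simpa [h0] using (hh 0).isBigO_sub
  intro z
  obtain ⟨u, hu, hgu⟩ := exists_summable_norm_comp_pow_smul_le hg hc (‖z‖ + 1)
  have hball : DifferentiableOn ℂ (fun w => ∏' n : ℕ, (1 + (h (c ^ (n + 1) * w) - 1)))
      (ball 0 (‖z‖ + 1)) := by
    refine differentiableOn_tprod_one_add isOpen_ball (hu.comp_injective (add_left_injective 1))
      ?_ fun n => ((hh.comp (differentiable_id.const_mul _)).sub_const 1).differentiableOn
    rw [Nat.cofinite_eq_atTop]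
    exact (tendsto_add_atTop_nat 1).eventually hgu
  simp only [add_sub_cancel] at hball
  exact hball.differentiableAt (isOpen_ball.mem_nhds (by simp))

theorem eventually_dilationProd_pow_mul_ne_zero (hc : ‖c‖ < 1) (hh : Differentiable ℂ h)
    (h0 : h 0 = 1) (z : ℂ) : ∀ᶠ k in atTop, dilationProd c h (c ^ k * z) ≠ 0 := by
  have hlim : Tendsto (fun k : ℕ => c ^ k * z) atTop (𝓝 0) := by
    simpa using (tendsto_pow_atTop_nhds_zero_of_norm_lt_one hc).mul_const z
  have hcont := (differentiable_dilationProd hc hh h0).continuous.tendsto 0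
  rw [dilationProd_zero_right h0] at hcont
  exact (hcont.comp hlim).eventually_ne one_ne_zero

theorem dilationProd_eq_zero_iff (hc : ‖c‖ < 1) (hh : Differentiable ℂ h) (h0 : h 0 = 1)
    (z : ℂ) : dilationProd c h z = 0 ↔ ∃ n : ℕ, h (c ^ (n + 1) * z) = 0 := by
  refine ⟨fun hz => ?_, fun ⟨n, hn⟩ => dilationProd_eq_zero_of_apply_eq_zero hn⟩
  obtain ⟨k, hk⟩ := (eventually_dilationProd_pow_mul_ne_zero hc hh h0 z).exists
  rw [dilationProd_eq_prod_mul hc (hh 0) h0 z k, mul_eq_zero, prod_eq_zero_iff] at hz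
  obtain ⟨n, -, hn⟩ := hz.resolve_right hk
  exact ⟨n, hn⟩

theorem analyticOrderAt_dilationProd (hc : ‖c‖ < 1) (hc0 : c ≠ 0) (hh : Differentiable ℂ h)
    (h0 : h 0 = 1) (z : ℂ) :
    (Function.support fun n : ℕ => analyticOrderAt h (c ^ (n + 1) * z)).Finite ∧
      analyticOrderAt (dilationProd c h) z = ∑ᶠ n : ℕ, analyticOrderAt h (c ^ (n + 1) * z) := by
  obtain ⟨k, hk⟩ := (eventually_dilationProd_pow_mul_ne_zero hc hh h0 z).exists
  have hsupp : (Function.support fun n : ℕ => analyticOrderAt h (c ^ (n + 1) * z)) ⊆ range k := by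
    intro n hn
    by_contra hnk
    refine hn (analyticOrderAt_eq_zero.mpr (Or.inr fun hzero => hk ?_))
    refine dilationProd_eq_zero_of_apply_eq_zero (n := n - k) ?_
    rwa [← mul_assoc, ← pow_add, show n - k + 1 + k = n + 1 by simp at hnk; omega]
  have hfactor : ∀ n, AnalyticAt ℂ (fun w => h (c ^ (n + 1) * w)) z := fun n =>
    (hh.comp (differentiable_id.const_mul _)).analyticAt z
  have htail : AnalyticAt ℂ (fun w => dilationProd c h (c ^ k * w)) z :=
    ((differentiable_dilationProd hc hh h0).comp (differentiable_id.const_mul _)).analyticAt z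
  have hsplit : dilationProd c h =
      (∏ n ∈ range k, fun w => h (c ^ (n + 1) * w)) * fun w => dilationProd c h (c ^ k * w) := by
    ext w
    simp [dilationProd_eq_prod_mul hc (hh 0) h0 w k]
  refine ⟨(range k).finite_toSet.subset hsupp, ?_⟩
  rw [finsum_eq_sum_of_support_subset _ hsupp, hsplit,
    analyticOrderAt_mul ((range k).analyticAt_prod fun n _ => hfactor n) htail,
    analyticOrderAt_finsetProd _ fun n _ => hfactor n,
    htail.analyticOrderAt_eq_zero.mpr hk, add_zero]
  refine sum_congr rfl fun n _ => ?_
  exact analyticOrderAt_comp_of_deriv_ne_zero (f := h) (g := fun w => c ^ (n + 1) * w)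
    (analyticAt_const.mul analyticAt_id) (by simp [hc0])

end dilationProd

theorem entire_solution_homogeneous_general (q : ℂ) (hq : 1 < ‖q‖)
    (h : ℂ → ℂ) (hh : AnalyticOnNhd ℂ h Set.univ)
    (h0 : h 0 = 1) :
    ∃ y : ℂ → ℂ, ∃ hy : AnalyticOnNhd ℂ y Set.univ,
      y 0 = 1 ∧
      (∀ x : ℂ, y (q * x) = h x * y x) ∧
      (∀ z : ℂ, y z = 0 ↔ ∃ n : ℕ, 1 ≤ n ∧ h (q ^ (-(n : ℤ)) * z) = 0) ∧
      (∀ z : ℂ,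
        (Function.support fun n : ℕ =>
          analyticOrderAt h (q ^ (-(n : ℤ) - 1) * z)).Finite ∧
        analyticOrderAt y z
          = ∑ᶠ n : ℕ, analyticOrderAt h (q ^ (-(n : ℤ) - 1) * z)) := by
  have hq0 : q ≠ 0 := norm_pos_iff.mp (one_pos.trans hq)
  have hc : ‖q⁻¹‖ < 1 := by simpa using inv_lt_one_of_one_lt₀ hq
  have hd : Differentiable ℂ h := fun z => (hh z trivial).differentiableAt
  have hzpow : ∀ n : ℕ, q ^ (-(n : ℤ)) = q⁻¹ ^ n := fun n => by simp
  have hzpow_sub_one : ∀ n : ℕ, q ^ (-(n : ℤ) - 1) = q⁻¹ ^ (n + 1) := fun n => by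
    rw [← hzpow, Nat.cast_succ, neg_add, sub_eq_add_neg]
  refine ⟨dilationProd q⁻¹ h, fun z _ => (differentiable_dilationProd hc hd h0).analyticAt z,
    dilationProd_zero_right h0, fun x => ?_, fun z => ?_, fun z => ?_⟩
  · simpa [hq0] using dilationProd_eq_mul hc (hd 0) h0 (q * x)
  · rw [dilationProd_eq_zero_iff hc hd h0]
    constructor
    · rintro ⟨n, hn⟩
      exact ⟨n + 1, by omega, by rwa [hzpow]⟩
    · rintro ⟨n, hn1, hn⟩
      exact ⟨n - 1, by rwa [Nat.sub_add_cancel hn1, ← hzpow]⟩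
  · simp only [hzpow_sub_one]
    exact analyticOrderAt_dilationProd hc (inv_ne_zero hq0) hd h0 z

/-- If `h` is entire, not identically zero, with `h(0) = 1`, then
there is an entire `y` with `y(0) = 1`, `y(qx) = h(x) y(x)`, whose zeros are exactly
the points `a qⁿ` (`a` a zero of `h`, `n ≥ 1`), and whose order of vanishing at any
point `z` is the (finitely supported) sum over `n ≥ 1` of the orders of vanishing of
`h` at `q⁻ⁿ z`. -/
theorem entire_solution_homogeneous (q : ℂ) (hq : 1 < ‖q‖)
    (h : ℂ → ℂ) (hh : AnalyticOnNhd ℂ h Set.univ)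
    (hne : ∃ x : ℂ, h x ≠ 0) (h0 : h 0 = 1) :
    ∃ y : ℂ → ℂ, ∃ hy : AnalyticOnNhd ℂ y Set.univ,
      y 0 = 1 ∧
      (∀ x : ℂ, y (q * x) = h x * y x) ∧
      (∀ z : ℂ, y z = 0 ↔ ∃ n : ℕ, 1 ≤ n ∧ h (q ^ (-(n : ℤ)) * z) = 0) ∧
      (∀ z : ℂ,
        (Function.support fun n : ℕ =>
          analyticOrderAt h (q ^ (-(n : ℤ) - 1) * z)).Finite ∧
        analyticOrderAt y z
          = ∑ᶠ n : ℕ, analyticOrderAt h (q ^ (-(n : ℤ) - 1) * z)) :=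
  entire_solution_homogeneous_general q hq h hh h0
end

section
/- Let h be an entire function, not identically zero. Let μ ∈ ℕ be the order of vanishing of h at 0 and let α = lim_{x→0} h(x)/x^{μ} (a nonzero complex number). Then there exists a function y meromorphic on ℂ ∖ {0}, not identically zero on ℂ ∖ {0}, such that y(qx) = h(x) y(x) holds for every x ∈ ℂ ∖ {0} at which y is analytic at x and at qx, and such that y is analytic at every point of ℂ ∖ {0} lying neither in {−q^n : n ∈ ℤ} nor in {α q^n : n ∈ ℤ}. Moreover, if h(0) = 1 then y can be chosen entire with y(0) = 1. -/
open Filter Topology Metric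

/-!
Write `h x = α * x ^ μ * G x` with `G` entire and `G 0 = 1`. Since `G (x / qⁿ) - 1 = O(‖q‖⁻ⁿ)`
locally uniformly, the product `F x = ∏_{n ≥ 1} G (x / qⁿ)` is entire, `F 0 = 1` and
`F (q * x) = G x * F x`. The theta function
`θ z = ∏_{n ≥ 0} (1 + z / qⁿ) ∏_{n ≥ 1} (1 + 1 / (qⁿ z))` is analytic on `ℂ ∖ {0}`, vanishes
only on `-q^ℤ` and satisfies `θ (q * z) = q * z * θ z`, so
`e x = θ (x / q) ^ μ * θ (-x) / θ (-x / α)` satisfies `e (q * x) = α * x ^ μ * e x` and has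
poles only on `α q^ℤ`. The solution is `y = F * e`. When `h 0 = 1`, the identity
`h 0 = α * 0 ^ μ` forces `μ = 0` and `α = 1`, so `G = h` and `F` itself is the entire solution.
-/

noncomputable def qShiftProd (q : ℂ) (G : ℂ → ℂ) (x : ℂ) : ℂ := ∏' n : ℕ, G (x / q ^ (n + 1))

section qShiftProd

variable {q : ℂ} {G : ℂ → ℂ}

lemma eventually_norm_qShiftProd_term_sub_one_le (hq : 1 < ‖q‖)
    (hG : DifferentiableAt ℂ G 0) (hG0 : G 0 = 1) (R : ℝ) :
    ∃ u : ℕ → ℝ, Summable u ∧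
      ∀ᶠ n in atTop, ∀ x ∈ ball (0 : ℂ) R, ‖G (x / q ^ (n + 1)) - 1‖ ≤ u n := by
  obtain ⟨c, hc0, hc⟩ := hG.isBigO_sub.exists_pos
  obtain ⟨δ, hδ, hGδ⟩ := Metric.eventually_nhds_iff.1 hc.bound
  have hr : ‖q‖⁻¹ < 1 := inv_lt_one_of_one_lt₀ hq
  have hgeom : Tendsto (fun n : ℕ => R * ‖q‖⁻¹ ^ (n + 1)) atTop (𝓝 0) := by
    simpa using ((tendsto_pow_atTop_nhds_zero_of_lt_one (by positivity) hr).comp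
      (tendsto_add_atTop_nat 1)).const_mul R
  refine ⟨fun n => c * (R * ‖q‖⁻¹ ^ (n + 1)), ?_, ?_⟩
  · exact ((summable_geometric_of_lt_one (by positivity) hr).comp_injective
      (add_left_injective 1)).mul_left R |>.mul_left c
  · filter_upwards [hgeom.eventually (gt_mem_nhds hδ)] with n hn x hx
    have hxn : ‖x / q ^ (n + 1)‖ ≤ R * ‖q‖⁻¹ ^ (n + 1) := by
      rw [norm_div, norm_pow, div_eq_mul_inv, inv_pow]
      exact mul_le_mul_of_nonneg_right (mem_ball_zero_iff.1 hx).le (by positivity)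
    have := hGδ (y := x / q ^ (n + 1)) (by rw [dist_zero_right]; linarith)
    rw [hG0, sub_zero] at this
    exact this.trans (mul_le_mul_of_nonneg_left hxn hc0.le)

lemma summable_norm_qShiftProd_term_sub_one (hq : 1 < ‖q‖) (hG : DifferentiableAt ℂ G 0)
    (hG0 : G 0 = 1) (x : ℂ) : Summable fun n : ℕ => ‖G (x / q ^ (n + 1)) - 1‖ := by
  obtain ⟨u, hu, hbound⟩ := eventually_norm_qShiftProd_term_sub_one_le hq hG hG0 (‖x‖ + 1)
  refine .of_norm_bounded_eventually hu ?_
  rw [Nat.cofinite_eq_atTop]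
  filter_upwards [hbound] with n hn
  simpa using hn x (mem_ball_zero_iff.2 (lt_add_one _))

lemma multipliable_qShiftProd_term (hq : 1 < ‖q‖) (hG : DifferentiableAt ℂ G 0)
    (hG0 : G 0 = 1) (x : ℂ) : Multipliable fun n : ℕ => G (x / q ^ (n + 1)) := by
  simpa using multipliable_one_add_of_summable (summable_norm_qShiftProd_term_sub_one hq hG hG0 x)

lemma qShiftProd_ne_zero (hq : 1 < ‖q‖) (hG : DifferentiableAt ℂ G 0) (hG0 : G 0 = 1) {x : ℂ}
    (hx : ∀ n : ℕ, G (x / q ^ (n + 1)) ≠ 0) : qShiftProd q G x ≠ 0 := by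
  simpa [qShiftProd] using tprod_one_add_ne_zero_of_summable (by simpa using hx)
    (summable_norm_qShiftProd_term_sub_one hq hG hG0 x)

lemma qShiftProd_zero (hG0 : G 0 = 1) : qShiftProd q G 0 = 1 := by
  simp [qShiftProd, hG0]

lemma qShiftProd_mul_left (hq : 1 < ‖q‖) (hG : DifferentiableAt ℂ G 0) (hG0 : G 0 = 1) (x : ℂ) :
    qShiftProd q G (q * x) = G x * qShiftProd q G x := by
  have hq0 : q ≠ 0 := norm_pos_iff.1 (one_pos.trans hq)
  have hshift : ∀ n : ℕ, q * x / q ^ (n + 1) = x / q ^ n := fun n => by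
    rw [pow_succ']; field_simp
  unfold qShiftProd
  rw [tprod_eq_zero_mul' ?_] <;> simp only [hshift, pow_zero, div_one]
  exact multipliable_qShiftProd_term hq hG hG0 x

lemma differentiable_qShiftProd (hq : 1 < ‖q‖) (hG : Differentiable ℂ G) (hG0 : G 0 = 1) :
    Differentiable ℂ (qShiftProd q G) := by
  intro x
  obtain ⟨u, hu, hbound⟩ :=
    eventually_norm_qShiftProd_term_sub_one_le hq (hG 0) hG0 (‖x‖ + 1)
  have hprod := hu.hasProdLocallyUniformlyOn_nat_one_add isOpen_ball hbound
    fun n => (hG.continuous.comp (continuous_id.div_const _)).sub continuous_const |>.continuousOn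
  simp only [add_sub_cancel] at hprod
  refine (hprod.tendstoLocallyUniformlyOn_finsetRange.differentiableOn
    (.of_forall fun N => ?_) isOpen_ball).differentiableAt
    (isOpen_ball.mem_nhds (mem_ball_zero_iff.2 (lt_add_one _)))
  simpa [Finset.prod_fn] using DifferentiableOn.finsetProd fun n _ =>
    (hG.comp (differentiable_id.div_const (q ^ (n + 1)))).differentiableOn

end qShiftProd

noncomputable def qTheta (q z : ℂ) : ℂ := qShiftProd q (1 + ·) (q * z) * qShiftProd q (1 + ·) z⁻¹

section qTheta

variable {q : ℂ}

lemma analyticAt_qTheta (hq : 1 < ‖q‖) {z : ℂ} (hz : z ≠ 0) : AnalyticAt ℂ (qTheta q) z := by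
  have hP := differentiable_qShiftProd hq (G := (1 + ·)) (by fun_prop) (add_zero 1)
  exact ((hP.analyticAt _).comp (analyticAt_const.mul analyticAt_id)).mul
    ((hP.analyticAt _).comp (analyticAt_id.inv hz))

lemma qTheta_mul_left (hq : 1 < ‖q‖) {z : ℂ} (hz : z ≠ 0) :
    qTheta q (q * z) = q * z * qTheta q z := by
  have hq0 : q ≠ 0 := norm_pos_iff.1 (one_pos.trans hq)
  have hP := qShiftProd_mul_left hq (G := (1 + ·)) (by fun_prop) (add_zero 1)
  have hinv := hP (q * z)⁻¹
  rw [show q * (q * z)⁻¹ = z⁻¹ by field_simp] at hinv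
  rw [qTheta, qTheta, hP, hinv]
  field_simp
  ring

lemma qTheta_ne_zero (hq : 1 < ‖q‖) {z : ℂ} (hz : ∀ n : ℤ, z ≠ -q ^ n) : qTheta q z ≠ 0 := by
  have hq0 : q ≠ 0 := norm_pos_iff.1 (one_pos.trans hq)
  have hP := @qShiftProd_ne_zero q (1 + ·) hq (by fun_prop) (add_zero 1)
  refine mul_ne_zero (hP fun n h => ?_) (hP fun n h => ?_)
  · refine hz n ?_
    rw [pow_succ', mul_div_mul_left _ _ hq0] at h
    rw [zpow_natCast]
    field_simp at h
    linear_combination h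
  · refine hz (-(n + 1 : ℕ)) ?_
    have hz0 : z ≠ 0 := by rintro rfl; simp at h
    rw [zpow_neg, zpow_natCast]
    field_simp at h ⊢
    linear_combination h

end qTheta

noncomputable def qCharacter (q α : ℂ) (μ : ℕ) (x : ℂ) : ℂ :=
  qTheta q (x / q) ^ μ * qTheta q (-x) / qTheta q (-x / α)

section qCharacter

variable {q α : ℂ} {μ : ℕ} {x : ℂ}

lemma AnalyticAt.qTheta (hq : 1 < ‖q‖) {f : ℂ → ℂ} (hf : AnalyticAt ℂ f x) (hfx : f x ≠ 0) :
    AnalyticAt ℂ (fun y => qTheta q (f y)) x :=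
  (analyticAt_qTheta hq hfx).comp hf

lemma qCharacter_mul_left (hq : 1 < ‖q‖) (hα : α ≠ 0) (hx : x ≠ 0) :
    qCharacter q α μ (q * x) = α * x ^ μ * qCharacter q α μ x := by
  have hq0 : q ≠ 0 := norm_pos_iff.1 (one_pos.trans hq)
  have h1 := qTheta_mul_left hq (div_ne_zero hx hq0)
  have h2 := qTheta_mul_left hq (neg_ne_zero.2 hx)
  have h3 := qTheta_mul_left hq (div_ne_zero (neg_ne_zero.2 hx) hα)
  rw [mul_div_cancel₀ x hq0] at h1
  rw [qCharacter, qCharacter, mul_div_cancel_left₀ x hq0, h1, neg_mul_eq_mul_neg, h2,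
    show q * -x / α = q * (-x / α) by ring, h3]
  by_cases hθ : qTheta q (-x / α) = 0
  · simp [hθ]
  · field_simp
    ring

lemma qTheta_neg_div_ne_zero (hq : 1 < ‖q‖) (hα : α ≠ 0) (hxα : ∀ n : ℤ, x ≠ α * q ^ n) :
    qTheta q (-x / α) ≠ 0 :=
  qTheta_ne_zero hq fun n h => hxα n (by field_simp at h; linear_combination -h)

lemma analyticAt_qCharacter_numerator (hq : 1 < ‖q‖) (hx : x ≠ 0) :
    AnalyticAt ℂ (fun y => qTheta q (y / q) ^ μ * qTheta q (-y)) x := by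
  have hq0 : q ≠ 0 := norm_pos_iff.1 (one_pos.trans hq)
  exact (((analyticAt_id.div_const (c := q)).qTheta hq (div_ne_zero hx hq0)).pow μ).mul
    (analyticAt_id.neg.qTheta hq (neg_ne_zero.2 hx))

lemma analyticAt_qCharacter_denominator (hq : 1 < ‖q‖) (hα : α ≠ 0) (hx : x ≠ 0) :
    AnalyticAt ℂ (fun y => qTheta q (-y / α)) x :=
  (analyticAt_id.neg.div_const (c := α)).qTheta hq (div_ne_zero (neg_ne_zero.2 hx) hα)

lemma meromorphicAt_qCharacter (hq : 1 < ‖q‖) (hα : α ≠ 0) (hx : x ≠ 0) :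
    MeromorphicAt (qCharacter q α μ) x :=
  (analyticAt_qCharacter_numerator hq hx).meromorphicAt.fun_div
    (analyticAt_qCharacter_denominator hq hα hx).meromorphicAt

lemma analyticAt_qCharacter (hq : 1 < ‖q‖) (hα : α ≠ 0) (hx : x ≠ 0)
    (hxα : ∀ n : ℤ, x ≠ α * q ^ n) : AnalyticAt ℂ (qCharacter q α μ) x :=
  (analyticAt_qCharacter_numerator hq hx).fun_div (analyticAt_qCharacter_denominator hq hα hx)
    (qTheta_neg_div_ne_zero hq hα hxα)

lemma qCharacter_ne_zero (hq : 1 < ‖q‖) (hα : α ≠ 0) (hx₁ : ∀ n : ℤ, x ≠ -q ^ n)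
    (hx₂ : ∀ n : ℤ, x ≠ q ^ n) (hx₃ : ∀ n : ℤ, x ≠ α * q ^ n) : qCharacter q α μ x ≠ 0 := by
  have hq0 : q ≠ 0 := norm_pos_iff.1 (one_pos.trans hq)
  refine div_ne_zero (mul_ne_zero (pow_ne_zero _ (qTheta_ne_zero hq fun n h => hx₁ (n + 1) ?_))
    (qTheta_ne_zero hq fun n h => hx₂ n (neg_injective h))) (qTheta_neg_div_ne_zero hq hα hx₃)
  rw [zpow_add_one₀ hq0]
  field_simp at h
  linear_combination h

lemma exists_mem_qCharacter_ne_zero (hq : 1 < ‖q‖) (hα : α ≠ 0) {U : Set ℂ} (hU : IsOpen U)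
    (hne : U.Nonempty) : ∃ x ∈ U, x ≠ 0 ∧ qCharacter q α μ x ≠ 0 := by
  let S : Set ℂ := {0} ∪ Set.range (fun n : ℤ => -q ^ n) ∪ Set.range (fun n : ℤ => q ^ n) ∪
    Set.range (fun n : ℤ => α * q ^ n)
  have hS : S.Countable := by simp [S, Set.countable_union, Set.countable_range]
  obtain ⟨x, hxU, hxS⟩ := (hS.dense_compl ℝ).inter_open_nonempty U hU hne
  simp only [S, Set.mem_compl_iff, Set.mem_union, Set.mem_singleton_iff, Set.mem_range,
    not_or, not_exists] at hxS
  obtain ⟨⟨⟨hx0, hx₁⟩, hx₂⟩, hx₃⟩ := hxS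
  exact ⟨x, hxU, hx0, qCharacter_ne_zero hq hα (fun n h => hx₁ n h.symm)
    (fun n h => hx₂ n h.symm) (fun n h => hx₃ n h.symm)⟩

end qCharacter

lemma exists_differentiable_eq_mul_pow_mul {h : ℂ → ℂ} (hh : Differentiable ℂ h) {μ : ℕ}
    {α : ℂ} (hα : α ≠ 0) (hlim : Tendsto (fun x => h x / x ^ μ) (𝓝[≠] 0) (𝓝 α)) :
    ∃ G : ℂ → ℂ, Differentiable ℂ G ∧ G 0 = 1 ∧ ∀ x, h x = α * x ^ μ * G x := by
  classical
  set G := Function.update (fun x => h x / x ^ μ / α) 0 1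
  have hG0 : G 0 = 1 := Function.update_self ..
  have hG : ∀ x ≠ 0, G x = h x / x ^ μ / α := fun x hx => Function.update_of_ne hx _ _
  refine ⟨G, ?_, hG0, fun x => ?_⟩
  · rw [← differentiableOn_univ, ← Complex.differentiableOn_compl_singleton_and_continuousAt_iff
      univ_mem]
    refine ⟨fun x hx => ?_, continuousAt_update_same.2 (by simpa [hα] using hlim.div_const α)⟩
    have hx : x ≠ 0 := hx.2
    refine (((hh x).div (differentiableAt_pow μ) (pow_ne_zero μ hx)).div_const α
      |>.congr_of_eventuallyEq ?_).differentiableWithinAt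
    filter_upwards [eventually_ne_nhds hx] with y hy using hG y hy
  by_cases hx : x = 0
  · subst hx
    have hpow : Tendsto (fun x : ℂ => h x / x ^ μ * x ^ μ) (𝓝[≠] 0) (𝓝 (α * 0 ^ μ)) :=
      hlim.mul (((continuous_pow μ).tendsto 0).mono_left nhdsWithin_le_nhds)
    have hcont : Tendsto h (𝓝[≠] 0) (𝓝 (h 0)) :=
      (hh.continuous.tendsto 0).mono_left nhdsWithin_le_nhds
    rw [hG0, mul_one]
    refine tendsto_nhds_unique hcont (hpow.congr' ?_)
    filter_upwards [self_mem_nhdsWithin] with y hy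
    exact div_mul_cancel₀ _ (pow_ne_zero μ hy)
  · rw [hG x hx]
    field_simp

theorem meromorphic_solution_homogeneous_entire_coeff_general (q : ℂ) (hq : 1 < ‖q‖)
    (h : ℂ → ℂ) (hh : AnalyticOnNhd ℂ h Set.univ)
    (μ : ℕ)
    (α : ℂ) (hα : α ≠ 0)
    (hlim : Filter.Tendsto (fun x : ℂ => h x / x ^ μ) (nhdsWithin 0 {0}ᶜ) (nhds α)) :
    (∃ y : ℂ → ℂ, MeromorphicOn y {x : ℂ | x ≠ 0} ∧
      (∃ x : ℂ, x ≠ 0 ∧ y x ≠ 0) ∧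
      (∀ x : ℂ, x ≠ 0 → AnalyticAt ℂ y x → AnalyticAt ℂ y (q * x) →
        y (q * x) = h x * y x) ∧
      (∀ x : ℂ, x ≠ 0 → (∀ n : ℤ, x ≠ -q ^ n) → (∀ n : ℤ, x ≠ α * q ^ n) →
        AnalyticAt ℂ y x)) ∧
    (h 0 = 1 → ∃ y : ℂ → ℂ, AnalyticOnNhd ℂ y Set.univ ∧ y 0 = 1 ∧
      ∀ x : ℂ, y (q * x) = h x * y x) := by
  obtain ⟨G, hG, hG0, hhG⟩ :=
    exists_differentiable_eq_mul_pow_mul (differentiableOn_univ.1 hh.differentiableOn) hα hlim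
  set F := qShiftProd q G
  have hF : Differentiable ℂ F := differentiable_qShiftProd hq hG hG0
  have hF0 : F 0 = 1 := qShiftProd_zero hG0
  have hFq : ∀ x, F (q * x) = G x * F x := qShiftProd_mul_left hq (hG 0) hG0
  refine ⟨⟨F * qCharacter q α μ, fun x hx => ?_, ?_, fun x hx _ _ => ?_, fun x hx _ hxα => ?_⟩,
    fun h0 => ?_⟩
  · exact (hF.analyticAt x).meromorphicAt.mul (meromorphicAt_qCharacter hq hα hx)
  · obtain ⟨x, hxF, hx0, hxe⟩ := exists_mem_qCharacter_ne_zero hq hα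
      (hF.continuous.isOpen_preimage {0}ᶜ isOpen_compl_singleton) ⟨0, by simp [hF0]⟩
    exact ⟨x, hx0, mul_ne_zero hxF hxe⟩
  · simp only [Pi.mul_apply]
    rw [hFq, qCharacter_mul_left hq hα hx, hhG x]
    ring
  · exact (hF.analyticAt x).mul (analyticAt_qCharacter hq hα hx hxα)
  · obtain ⟨rfl, rfl⟩ : μ = 0 ∧ α = 1 := by
      have h00 := hhG 0
      rw [h0, hG0, mul_one] at h00
      rcases μ with _ | μ
      · simpa using h00.symm
      · simp at h00
    refine ⟨F, fun x _ => hF.analyticAt x, hF0, fun x => ?_⟩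
    rw [hFq, hhG x, pow_zero, one_mul, one_mul]

/-- If `h` is entire, not identically zero, with order of vanishing
`μ` at `0` and `α = lim_{x→0} h(x)/x^μ ≠ 0`, then the equation `y(qx) = h(x) y(x)` has
a solution meromorphic on `ℂ ∖ {0}`, not identically zero there, analytic away from
the spirals `−q^ℤ` and `α q^ℤ`; if moreover `h(0) = 1`, an entire solution with
`y(0) = 1` exists. -/
theorem meromorphic_solution_homogeneous_entire_coeff (q : ℂ) (hq : 1 < ‖q‖)
    (h : ℂ → ℂ) (hh : AnalyticOnNhd ℂ h Set.univ) (hne : ∃ x : ℂ, h x ≠ 0)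
    (μ : ℕ) (hμ : analyticOrderAt h 0 = (μ : ℕ∞))
    (α : ℂ) (hα : α ≠ 0)
    (hlim : Filter.Tendsto (fun x : ℂ => h x / x ^ μ) (nhdsWithin 0 {0}ᶜ) (nhds α)) :
    (∃ y : ℂ → ℂ, MeromorphicOn y {x : ℂ | x ≠ 0} ∧
      (∃ x : ℂ, x ≠ 0 ∧ y x ≠ 0) ∧
      (∀ x : ℂ, x ≠ 0 → AnalyticAt ℂ y x → AnalyticAt ℂ y (q * x) →
        y (q * x) = h x * y x) ∧
      (∀ x : ℂ, x ≠ 0 → (∀ n : ℤ, x ≠ -q ^ n) → (∀ n : ℤ, x ≠ α * q ^ n) →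
        AnalyticAt ℂ y x)) ∧
    (h 0 = 1 → ∃ y : ℂ → ℂ, AnalyticOnNhd ℂ y Set.univ ∧ y 0 = 1 ∧
      ∀ x : ℂ, y (q * x) = h x * y x) :=
  meromorphic_solution_homogeneous_entire_coeff_general q hq h hh μ α hα hlim
end

section
/- Let R be meromorphic on ℂ ∖ {0}, let P denote the set of poles of R, and let ρ > 0. Set S = {q^n : n ∈ ℤ} ∪ {a q^n : a ∈ P, |a| > ρ, n an integer ≥ 1} ∪ {a q^{−n} : a ∈ P, |a| ≤ ρ, n an integer ≥ 0}. Then there exists a function y meromorphic on ℂ ∖ {0} such that y is analytic at every point of (ℂ ∖ {0}) ∖ S, and y(qx) = y(x) + R(x) holds for every x ∈ ℂ ∖ {0} at which R is analytic at x and y is analytic at x and at qx. -/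
/-
Replace `R` by its meromorphic normal form, which is analytic wherever `R` has no pole. Choose
radii `ρ < r₁ < r₂` with no pole in `r₁ ≤ |x| ≤ r₂`; the Cauchy integrals over `|z| = r₁` and
`|z| = r₂` split `R = P + Q` with `P` analytic for `|x| > ρ` and `O(1/x)` at `∞`, and `Q` analytic
for `|x| ≤ ρ`. The series `-∑_{n ≥ 0} P(qⁿx)` and `∑_{n ≥ 1} (Q(q⁻ⁿx) - Q(0))` then converge
geometrically, locally uniformly on `ℂ ∖ {0}`, and solve the equation with right-hand sides `P`
and `Q - Q(0)`; the constant `Q(0)` is produced by a `q`-logarithm built in the same way. A pole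
of either series lies on the `q`-orbit of a pole of `R` on the correct side of `|x| = ρ`, that is
in `S`.
-/

open Filter Metric Set Complex Asymptotics Bornology
open scoped Topology Real

section CauchyIntegral

variable {g : ℂ → ℂ} {c : ℂ} {r : ℝ}

theorem circleIntegral_div_sub_sub_div_sub (hr : 0 ≤ r) (hg : ContinuousOn g (sphere c r))
    {w w₀ : ℂ} (hw : w ∉ sphere c r) (hw₀ : w₀ ∉ sphere c r) :
    (∮ z in C(c, r), g z / (z - w)) - ∮ z in C(c, r), g z / (z - w₀) =
      (w - w₀) * ∮ z in C(c, r), g z / ((z - w) * (z - w₀)) := by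
  have hne : ∀ v ∉ sphere c r, ∀ z ∈ sphere c r, z - v ≠ 0 := fun v hv z hz h =>
    hv (sub_eq_zero.mp h ▸ hz)
  have hint : ∀ v ∉ sphere c r, CircleIntegrable (fun z => g z / (z - v)) c r := fun v hv =>
    (hg.div (continuousOn_id.sub continuousOn_const) (hne v hv)).circleIntegrable hr
  rw [← circleIntegral.integral_sub (hint w hw) (hint w₀ hw₀), ← circleIntegral.integral_const_mul]
  refine circleIntegral.integral_congr hr fun z hz => ?_
  have := hne w hw z hz
  have := hne w₀ hw₀ z hz
  field_simp
  ring

theorem continuousOn_circleIntegral_div_mul_sub (hr : 0 ≤ r) (hg : ContinuousOn g (sphere c r))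
    {w₀ : ℂ} (hw₀ : w₀ ∉ sphere c r) :
    ContinuousOn (fun w => ∮ z in C(c, r), g z / ((z - w) * (z - w₀))) (sphere c r)ᶜ := by
  rw [continuousOn_iff_continuous_domRestrict]
  refine intervalIntegral.continuous_parametric_intervalIntegral_of_continuous' ?_ _ _
  have hgc : Continuous fun θ => g (circleMap c r θ) :=
    hg.comp_continuous (continuous_circleMap c r) (circleMap_mem_sphere c hr)
  have hne : ∀ v ∉ sphere c r, ∀ θ, circleMap c r θ - v ≠ 0 := fun v hv θ h =>
    hv (sub_eq_zero.mp h ▸ circleMap_mem_sphere c hr θ)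
  have hcm : Continuous fun p : ((sphere c r)ᶜ : Set ℂ) × ℝ => circleMap c r p.2 :=
    (continuous_circleMap c r).comp continuous_snd
  simp only [deriv_circleMap]
  refine Continuous.smul (((continuous_circleMap 0 r).comp continuous_snd).mul continuous_const)
    ((hgc.comp continuous_snd).div ((hcm.sub (continuous_subtype_val.comp continuous_fst)).mul
      (hcm.sub continuous_const)) ?_)
  rintro ⟨w, θ⟩
  exact mul_ne_zero (hne w w.2 θ) (hne w₀ hw₀ θ)

theorem analyticAt_circleIntegral_div_sub (hr : 0 ≤ r) (hg : ContinuousOn g (sphere c r))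
    {w : ℂ} (hw : w ∉ sphere c r) :
    AnalyticAt ℂ (fun w => ∮ z in C(c, r), g z / (z - w)) w := by
  have hU : IsOpen (sphere c r)ᶜ := isClosed_sphere.isOpen_compl
  refine DifferentiableOn.analyticAt (fun w₀ hw₀ => ?_) (hU.mem_nhds hw)
  refine (HasDerivAt.differentiableAt (f' := ∮ z in C(c, r), g z / ((z - w₀) * (z - w₀))) ?_)
    |>.differentiableWithinAt
  rw [hasDerivAt_iff_tendsto_slope]
  refine (((continuousOn_circleIntegral_div_mul_sub hr hg hw₀).continuousAt
    (hU.mem_nhds hw₀)).tendsto.mono_left nhdsWithin_le_nhds).congr' ?_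
  filter_upwards [self_mem_nhdsWithin, nhdsWithin_le_nhds (hU.mem_nhds hw₀)] with w hww₀ hw
  rw [slope_def_field, circleIntegral_div_sub_sub_div_sub hr hg hw hw₀,
    mul_div_cancel_left₀ _ (sub_ne_zero.mpr hww₀)]

theorem isBigO_circleIntegral_div_sub (hr : 0 < r)
    (hg : ContinuousOn g (sphere c r)) :
    (fun x => ∮ z in C(c, r), g z / (z - x)) =O[cobounded ℂ] (·⁻¹) := by
  obtain ⟨M, hM⟩ := (isCompact_sphere c r).exists_bound_of_continuousOn hg
  refine IsBigO.of_bound (2 * π * r * (2 * M)) ?_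
  filter_upwards [eventually_cobounded_le_norm (2 * (‖c‖ + r))] with x hx
  have hx0 : 0 < ‖x‖ := by linarith [norm_nonneg c]
  have hbound : ∀ z ∈ sphere c r, ‖g z / (z - x)‖ ≤ 2 * M * ‖x⁻¹‖ := fun z hz => by
    have h1 := norm_sub_norm_le x z
    have h2 : ‖z‖ ≤ ‖c‖ + r := by
      simpa [mem_sphere_iff_norm.mp hz] using norm_le_norm_add_norm_sub' z c
    rw [norm_sub_rev] at h1
    calc ‖g z / (z - x)‖ ≤ M / (‖x‖ / 2) := by
          rw [norm_div]
          exact div_le_div₀ ((norm_nonneg _).trans (hM z hz)) (hM z hz) (by positivity)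
            (by linarith)
      _ = 2 * M * ‖x⁻¹‖ := by rw [norm_inv]; field_simp
  rw [mul_assoc (2 * π * r)]
  exact circleIntegral.norm_integral_le_of_norm_le_const hr.le hbound

theorem circleIntegral_div_sub_sub_circleIntegral_div_sub_of_annulus {f : ℂ → ℂ} {x : ℂ}
    {R : ℝ} (hr : 0 < r) (hx : x ∈ ball c R \ closedBall c r)
    (hf : AnalyticOnNhd ℂ f (closedBall c R \ ball c r)) :
    (∮ z in C(c, R), f z / (z - x)) - (∮ z in C(c, r), f z / (z - x)) = 2 * π * I * f x := by
  have hrR : r ≤ R := (not_le.mp hx.2).le.trans (mem_ball.mp hx.1).le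
  have hsub : closedBall c R \ ball c r ⊆ {z | AnalyticAt ℂ f z} := hf
  have hdiff : ball c R \ closedBall c r ⊆ closedBall c R \ ball c r :=
    sdiff_subset_sdiff ball_subset_closedBall ball_subset_closedBall
  -- `dslope f x` removes the singularity of the Cauchy kernel at `x`
  have hd : DifferentiableOn ℂ (dslope f x) {z | AnalyticAt ℂ f z} :=
    (differentiableOn_dslope ((isOpen_analyticAt ℂ f).mem_nhds (hf x (hdiff hx)))).mpr
      fun z hz => hz.differentiableAt.differentiableWithinAt
  have key := circleIntegral_eq_of_differentiable_on_annulus_off_countable hr hrR countable_empty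
    (hd.continuousOn.mono hsub) fun z hz =>
      hd.differentiableAt ((isOpen_analyticAt ℂ f).mem_nhds (hsub (hdiff hz.1)))
  have hsplit : ∀ ρ : ℝ, r ≤ ρ → ρ ≤ R → x ∉ sphere c ρ →
      ∮ z in C(c, ρ), dslope f x z =
        (∮ z in C(c, ρ), f z / (z - x)) - f x * ∮ z in C(c, ρ), (z - x)⁻¹ := by
    intro ρ hrρ hρR hxρ
    have hρ : 0 ≤ ρ := hr.le.trans hrρ
    have hne : ∀ z ∈ sphere c ρ, z - x ≠ 0 := fun z hz h => hxρ (sub_eq_zero.mp h ▸ hz)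
    have hcont : ContinuousOn f (sphere c ρ) := fun z hz =>
      (hf z ⟨sphere_subset_closedBall.trans (closedBall_subset_closedBall hρR) hz,
        fun h => (mem_ball.mp h).not_ge (hrρ.trans_eq (mem_sphere.mp hz).symm)⟩)
        |>.continuousAt.continuousWithinAt
    have := circleIntegral.integral_sub (f := fun z => f z / (z - x))
      (g := fun z => f x * (z - x)⁻¹)
      ((hcont.div (continuousOn_id.sub continuousOn_const) hne).circleIntegrable hρ)
      ((continuousOn_const.mul ((continuousOn_id.sub continuousOn_const).inv₀ hne)).circleIntegrable
        hρ)
    rw [← circleIntegral.integral_const_mul, ← this]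
    refine circleIntegral.integral_congr hρ fun z hz => ?_
    rw [dslope_of_ne _ fun h => hne z hz (sub_eq_zero.mpr h), slope_def_field]
    field_simp [hne z hz]
  have hout : ∮ z in C(c, r), (z - x)⁻¹ = 0 :=
    DiffContOnCl.circleIntegral_eq_zero hr.le <| DifferentiableOn.diffContOnCl_ball
      (U := {x}ᶜ) (fun z hz => ((differentiableAt_id.sub_const x).inv
        (sub_ne_zero.mpr hz)).differentiableWithinAt) fun z hz h => hx.2 (h ▸ hz)
  rw [hsplit R hrR le_rfl (ne_of_lt hx.1), hsplit r le_rfl hrR (ne_of_gt (not_le.mp hx.2)),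
    circleIntegral.integral_sub_inv_of_mem_ball hx.1, hout] at key
  linear_combination key

end CauchyIntegral

theorem exists_laurent_decomposition {F : ℂ → ℂ} {r₁ r₂ : ℝ} (h₁ : 0 < r₁) (h₁₂ : r₁ < r₂)
    (hF : AnalyticOnNhd ℂ F (closedBall 0 r₂ \ ball 0 r₁)) :
    ∃ P Q : ℂ → ℂ, F = P + Q ∧ AnalyticOnNhd ℂ P (closedBall 0 r₁)ᶜ ∧
      AnalyticOnNhd ℂ Q (ball 0 r₂) ∧ P =O[cobounded ℂ] (·⁻¹) := by
  classical
  have hcont : ∀ r, r₁ ≤ r → r ≤ r₂ → ContinuousOn F (sphere 0 r) := fun r h₁r hr₂ z hz =>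
    (hF z ⟨closedBall_subset_closedBall hr₂ (sphere_subset_closedBall hz),
      fun h => (mem_ball.mp h).not_ge (h₁r.trans_eq (mem_sphere.mp hz).symm)⟩)
      |>.continuousAt.continuousWithinAt
  set G : ℝ → ℂ → ℂ := fun r x => (2 * π * I)⁻¹ * ∮ z in C(0, r), F z / (z - x) with hG
  have hGan : ∀ r x, r₁ ≤ r → r ≤ r₂ → x ∉ sphere 0 r → AnalyticAt ℂ (G r) x :=
    fun r x h₁r hr₂ hx => analyticAt_const.mul
      (analyticAt_circleIntegral_div_sub (h₁.le.trans h₁r) (hcont r h₁r hr₂) hx)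
  have hGF : ∀ x ∈ ball (0 : ℂ) r₂ \ closedBall 0 r₁, G r₂ x - G r₁ x = F x := fun x hx => by
    rw [hG, ← mul_sub, circleIntegral_div_sub_sub_circleIntegral_div_sub_of_annulus h₁ hx hF]
    field_simp [Real.pi_ne_zero, I_ne_zero]
  set P : ℂ → ℂ := fun x => if x ∈ closedBall 0 r₁ then F x - G r₂ x else -G r₁ x with hP
  refine ⟨P, F - P, (add_sub_cancel _ _).symm, fun x hx => ?_, fun x hx => ?_, ?_⟩
  · refine (hGan r₁ x le_rfl h₁₂.le fun h => hx (sphere_subset_closedBall h)).neg.congr ?_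
    filter_upwards [isClosed_closedBall.isOpen_compl.mem_nhds hx] with w hw
    simp only [hP, if_neg hw, Pi.neg_apply]
  · refine (hGan r₂ x h₁₂.le le_rfl fun h => (mem_ball.mp hx).ne (mem_sphere.mp h)).congr ?_
    filter_upwards [isOpen_ball.mem_nhds hx] with w hw
    by_cases hw₁ : w ∈ closedBall 0 r₁
    · simp only [Pi.sub_apply, hP, if_pos hw₁, sub_sub_cancel]
    · simp only [Pi.sub_apply, hP, if_neg hw₁, ← hGF w ⟨hw, hw₁⟩]
      ring
  · refine (isBigO_circleIntegral_div_sub h₁ (hcont r₁ le_rfl h₁₂.le)).const_mul_left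
      (-(2 * π * I)⁻¹) |>.congr' ?_ EventuallyEq.rfl
    filter_upwards [eventually_cobounded_le_norm (r₁ + 1)] with x hx
    have : x ∉ closedBall 0 r₁ := fun h => by linarith [mem_closedBall_zero_iff.mp h]
    simp only [hP, if_neg this, hG, neg_mul]

theorem exists_gt_forall_analyticAt_of_meromorphicOn {E : Type*} [NormedAddCommGroup E]
    [NormedSpace ℂ E] {f : ℂ → E} {ρ R : ℝ} (hρR : ρ < R)
    (hf : MeromorphicOn f (closedBall 0 R \ ball 0 ρ)) :
    ∃ m, ρ < m ∧ ∀ z : ℂ, ρ < ‖z‖ → ‖z‖ < m → AnalyticAt ℂ f z := by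
  set K := closedBall (0 : ℂ) R \ ball 0 ρ
  have hfin : (K \ {z | AnalyticAt ℂ f z}).Finite :=
    ((isCompact_closedBall 0 R).diff isOpen_ball).finite_sdiff_of_mem_codiscreteWithin
      hf.analyticAt_mem_codiscreteWithin
  have hev : ∀ᶠ m in 𝓝[>] ρ, m < R ∧ ∀ a ∈ K \ {z | AnalyticAt ℂ f z}, ρ < ‖a‖ → m < ‖a‖ :=
    nhdsWithin_le_nhds <| (eventually_lt_nhds hρR).and <| (eventually_all_finite hfin).mpr
      fun a _ => eventually_imp_distrib_left.mpr fun ha => eventually_lt_nhds ha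
  obtain ⟨m, ⟨hmR, hm⟩, hρm⟩ := (hev.and self_mem_nhdsWithin).exists
  refine ⟨m, hρm, fun z hρz hzm => ?_⟩
  by_contra hz
  exact (hm z ⟨⟨mem_closedBall_zero_iff.mpr (hzm.trans hmR).le,
    fun h => (mem_ball_zero_iff.mp h).not_gt hρz⟩, hz⟩ hρz).not_gt hzm

theorem MeromorphicOn.exists_laurent_split {F : ℂ → ℂ} (hF : MeromorphicOn F {x | x ≠ 0})
    {ρ : ℝ} (hρ : 0 < ρ) :
    ∃ P Q : ℂ → ℂ, F = P + Q ∧ MeromorphicOn P {x | x ≠ 0} ∧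
      (∀ x, x ≠ 0 → (ρ < ‖x‖ ∨ AnalyticAt ℂ F x) → AnalyticAt ℂ P x) ∧
      (∀ x, (‖x‖ ≤ ρ ∨ AnalyticAt ℂ F x) → AnalyticAt ℂ Q x) ∧
      P =O[cobounded ℂ] (·⁻¹) := by
  obtain ⟨m, hρm, hm⟩ := exists_gt_forall_analyticAt_of_meromorphicOn (lt_add_one ρ)
    (hF.mono_set fun z hz h => by simp_all)
  obtain ⟨r₁, hρr₁, hr₁m⟩ := exists_between hρm
  obtain ⟨r₂, hr₁r₂, hr₂m⟩ := exists_between hr₁m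
  obtain ⟨P, Q, hPQ, hP, hQ, hPO⟩ := exists_laurent_decomposition (hρ.trans hρr₁) hr₁r₂
    fun z hz => hm z (hρr₁.trans_le (by simpa using hz.2))
      ((mem_closedBall_zero_iff.mp hz.1).trans_lt hr₂m)
  have hQP : Q = F - P := by rw [hPQ]; ring
  have hPQ' : P = F - Q := by rw [hPQ]; ring
  have hPF : ∀ x, x ≠ 0 → (ρ < ‖x‖ ∨ AnalyticAt ℂ F x) → AnalyticAt ℂ P x := by
    intro x hx hcase
    by_cases hx₁ : r₁ < ‖x‖
    · exact hP x (by simpa using hx₁)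
    · rw [hPQ']
      refine .sub (hcase.elim (fun h => hm x h (by linarith)) fun h => h)
        (hQ x (mem_ball_zero_iff.mpr (by linarith)))
  refine ⟨P, Q, hPQ, fun x hx => ?_, hPF, fun x hcase => ?_, hPO⟩
  · by_cases hx₁ : ρ < ‖x‖
    · exact (hPF x hx (Or.inl hx₁)).meromorphicAt
    · rw [hPQ']
      exact (hF x hx).sub (hQ x (mem_ball_zero_iff.mpr (by linarith))).meromorphicAt
  · by_cases hx₂ : ‖x‖ < r₂
    · exact hQ x (mem_ball_zero_iff.mpr hx₂)
    · rw [hQP]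
      refine .sub (hcase.resolve_left (by linarith)) (hP x (by simp; linarith))

theorem exists_analyticAt_tsum_eventuallyEq_sum_add {f : ℕ → ℂ → ℂ} {s : Set ℂ} {x₀ : ℂ}
    (hs : IsOpen s) (hx₀ : x₀ ∈ s) {u : ℕ → ℝ} (hu : Summable u) (N : ℕ)
    (hd : ∀ n, N ≤ n → DifferentiableOn ℂ (f n) s) (hb : ∀ n, N ≤ n → ∀ x ∈ s, ‖f n x‖ ≤ u n) :
    ∃ g : ℂ → ℂ, AnalyticAt ℂ g x₀ ∧
      (fun x => ∑' n, f n x) =ᶠ[𝓝 x₀] fun x => ∑ n ∈ Finset.range N, f n x + g x := by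
  have hu' : Summable fun n => u (n + N) := (summable_nat_add_iff N).mpr hu
  refine ⟨fun x => ∑' n, f (n + N) x, ?_, ?_⟩
  · exact (differentiableOn_tsum_of_summable_norm hu' (fun n => hd _ (Nat.le_add_left N n)) hs
      fun n x hx => hb _ (Nat.le_add_left N n) x hx).analyticAt (hs.mem_nhds hx₀)
  · filter_upwards [hs.mem_nhds hx₀] with x hx
    refine (Summable.sum_add_tsum_nat_add N ?_).symm
    exact (summable_nat_add_iff N).mp (hu'.of_norm_bounded fun n =>
      hb _ (Nat.le_add_left N n) x hx)

noncomputable def qOrbitSum (q : ℂ) (f : ℂ → ℂ) (x : ℂ) : ℂ := ∑' n : ℕ, f (q ^ n * x)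

section qOrbitSum

variable {q : ℂ} {f : ℂ → ℂ}

theorem exists_analyticAt_qOrbitSum_eventuallyEq_sum_add (hq : 1 < ‖q‖)
    (hf : f =O[cobounded ℂ] (·⁻¹)) (hfa : ∀ᶠ x in cobounded ℂ, AnalyticAt ℂ f x) {x₀ : ℂ}
    (hx₀ : x₀ ≠ 0) :
    ∃ N, ∃ g : ℂ → ℂ, AnalyticAt ℂ g x₀ ∧
      qOrbitSum q f =ᶠ[𝓝 x₀] fun x => ∑ n ∈ Finset.range N, f (q ^ n * x) + g x := by
  obtain ⟨c, hc, hfc⟩ := hf.exists_nonneg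
  obtain ⟨T, -, hT⟩ := hasBasis_cobounded_norm.eventually_iff.mp (hfc.bound.and hfa)
  have hx₀' : 0 < ‖x₀‖ / 2 := by positivity
  obtain ⟨N, hN⟩ := eventually_atTop.mp
    ((tendsto_pow_atTop_atTop_of_one_lt hq).eventually_ge_atTop (T / (‖x₀‖ / 2)))
  have hlow : ∀ n, ∀ x ∈ ball x₀ (‖x₀‖ / 2), ‖q‖ ^ n * (‖x₀‖ / 2) ≤ ‖q ^ n * x‖ := by
    intro n x hx
    rw [norm_mul, norm_pow]
    gcongr
    have := norm_sub_norm_le x₀ x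
    rw [mem_ball, dist_eq_norm, ← norm_neg, neg_sub] at hx
    linarith
  have hfar : ∀ n, N ≤ n → ∀ x ∈ ball x₀ (‖x₀‖ / 2), T ≤ ‖q ^ n * x‖ := fun n hn x hx =>
    ((div_le_iff₀ hx₀').mp (hN n hn)).trans (hlow n x hx)
  refine ⟨N, exists_analyticAt_tsum_eventuallyEq_sum_add (f := fun n x => f (q ^ n * x))
    isOpen_ball (mem_ball_self hx₀') (u := fun n => c / (‖x₀‖ / 2) * ‖q‖⁻¹ ^ n) ?_ N
    (fun n hn x hx => ?_) fun n hn x hx => ?_⟩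
  · exact (summable_geometric_of_lt_one (by positivity) (inv_lt_one_of_one_lt₀ hq)).mul_left _
  · exact ((hT (hfar n hn x hx)).2.comp_of_eq (analyticAt_const.mul analyticAt_id) rfl)
      |>.differentiableAt.differentiableWithinAt
  · calc ‖f (q ^ n * x)‖ ≤ c * ‖(q ^ n * x)⁻¹‖ := (hT (hfar n hn x hx)).1
      _ ≤ c * (‖q‖ ^ n * (‖x₀‖ / 2))⁻¹ := by
        rw [norm_inv]
        gcongr
        exact hlow n x hx
      _ = c / (‖x₀‖ / 2) * ‖q‖⁻¹ ^ n := by rw [inv_pow]; field_simp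

theorem qOrbitSum_mul_left (hq : 1 < ‖q‖) (hf : f =O[cobounded ℂ] (·⁻¹)) {x : ℂ} (hx : x ≠ 0) :
    qOrbitSum q f (q * x) = qOrbitSum q f x - f x := by
  have hto : Tendsto (fun n : ℕ => q ^ n * x) atTop (cobounded ℂ) := by
    rw [← tendsto_norm_atTop_iff_cobounded]
    simp only [norm_mul, norm_pow]
    exact (tendsto_pow_atTop_atTop_of_one_lt hq).atTop_mul_const (norm_pos_iff.mpr hx)
  have hgeom : Summable fun n : ℕ => (q ^ n * x)⁻¹ := by
    simp only [mul_inv, ← inv_pow]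
    exact (summable_geometric_of_norm_lt_one
      (by rw [norm_inv]; exact inv_lt_one_of_one_lt₀ hq)).mul_right x⁻¹
  have hsum : Summable fun n : ℕ => f (q ^ n * x) :=
    summable_of_isBigO_nat' hgeom (hf.comp_tendsto hto)
  rw [qOrbitSum, qOrbitSum, hsum.tsum_eq_zero_add]
  simp [pow_succ, mul_assoc]

theorem meromorphicOn_qOrbitSum (hq : 1 < ‖q‖) (hf : f =O[cobounded ℂ] (·⁻¹))
    (hfa : ∀ᶠ x in cobounded ℂ, AnalyticAt ℂ f x)
    (hmero : MeromorphicOn f {x | x ≠ 0}) :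
    MeromorphicOn (qOrbitSum q f) {x | x ≠ 0} := fun x₀ hx₀ => by
  obtain ⟨N, g, hg, heq⟩ := exists_analyticAt_qOrbitSum_eventuallyEq_sum_add hq hf hfa hx₀
  have hq₀ : q ≠ 0 := norm_pos_iff.mp (one_pos.trans hq)
  refine ((MeromorphicAt.fun_sum fun n _ => ?_).add hg.meromorphicAt).congr
    (heq.filter_mono nhdsWithin_le_nhds).symm
  exact (hmero _ (mul_ne_zero (pow_ne_zero n hq₀) hx₀)).comp_analyticAt
    (analyticAt_const.mul analyticAt_id)

theorem analyticAt_qOrbitSum (hq : 1 < ‖q‖) (hf : f =O[cobounded ℂ] (·⁻¹))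
    (hfa : ∀ᶠ x in cobounded ℂ, AnalyticAt ℂ f x) {x₀ : ℂ} (hx₀ : x₀ ≠ 0)
    (hfx : ∀ n : ℕ, AnalyticAt ℂ f (q ^ n * x₀)) : AnalyticAt ℂ (qOrbitSum q f) x₀ := by
  obtain ⟨N, g, hg, heq⟩ := exists_analyticAt_qOrbitSum_eventuallyEq_sum_add hq hf hfa hx₀
  refine ((Finset.analyticAt_fun_sum _ fun n _ => ?_).add hg).congr heq.symm
  exact (hfx n).comp_of_eq (analyticAt_const.mul analyticAt_id) rfl

theorem exists_qDifference_solution_of_isBigO_inv (hq : 1 < ‖q‖) (hf : f =O[cobounded ℂ] (·⁻¹))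
    (hfa : ∀ᶠ x in cobounded ℂ, AnalyticAt ℂ f x)
    (hmero : MeromorphicOn f {x | x ≠ 0}) :
    ∃ g : ℂ → ℂ, MeromorphicOn g {x | x ≠ 0} ∧
      (∀ x, x ≠ 0 → (∀ n : ℕ, AnalyticAt ℂ f (q ^ n * x)) → AnalyticAt ℂ g x) ∧
      ∀ x, x ≠ 0 → g (q * x) = g x + f x :=
  ⟨-qOrbitSum q f, (meromorphicOn_qOrbitSum hq hf hfa hmero).neg,
    fun x hx hfx => (analyticAt_qOrbitSum hq hf hfa hx hfx).neg,
    fun x hx => by simp only [Pi.neg_apply, qOrbitSum_mul_left hq hf hx]; ring⟩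

end qOrbitSum

theorem exists_qDifference_solution_of_analyticAt_zero {q : ℂ} (hq : 1 < ‖q‖) {h : ℂ → ℂ}
    (hmero : MeromorphicOn h {x | x ≠ 0}) (h0 : AnalyticAt ℂ h 0) (hz : h 0 = 0) :
    ∃ g : ℂ → ℂ, MeromorphicOn g {x | x ≠ 0} ∧
      (∀ x, x ≠ 0 → (∀ n : ℕ, AnalyticAt ℂ h (x / q ^ (n + 1))) → AnalyticAt ℂ g x) ∧
      ∀ x, x ≠ 0 → g (q * x) = g x + h x := by
  have hq₀ : q ≠ 0 := norm_pos_iff.mp (one_pos.trans hq)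
  -- `x ↦ x⁻¹` exchanges `0` and `∞`, reducing to the case of decay at infinity
  set f : ℂ → ℂ := fun u => h u⁻¹ with hf_def
  have hf : f =O[cobounded ℂ] (·⁻¹) := by
    have := h0.differentiableAt.isBigO_sub.comp_tendsto tendsto_inv₀_cobounded
    simp only [hz, sub_zero] at this
    exact this
  have hfa : ∀ᶠ u in cobounded ℂ, AnalyticAt ℂ f u := by
    filter_upwards [tendsto_inv₀_cobounded.eventually h0.eventually_analyticAt,
      eventually_cobounded_le_norm 1] with u hu hu1
    exact hu.comp_of_eq (analyticAt_inv (norm_pos_iff.mp (one_pos.trans_le hu1))) rfl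
  have hmf : MeromorphicOn f {x | x ≠ 0} := fun u hu =>
    (hmero _ (inv_ne_zero hu)).comp_analyticAt (analyticAt_inv hu)
  have hφ : ∀ x : ℂ, x ≠ 0 → AnalyticAt ℂ (fun x => q * x⁻¹) x := fun x hx =>
    analyticAt_const.mul (analyticAt_inv hx)
  refine ⟨fun x => qOrbitSum q f (q * x⁻¹), fun x hx => ?_, fun x hx hhx => ?_, fun x hx => ?_⟩
  · exact MeromorphicAt.comp_analyticAt (g := fun x => q * x⁻¹)
      (meromorphicOn_qOrbitSum hq hf hfa hmf _ (mul_ne_zero hq₀ (inv_ne_zero hx))) (hφ x hx)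
  · refine (analyticAt_qOrbitSum hq hf hfa (mul_ne_zero hq₀ (inv_ne_zero hx)) fun n => ?_)
      |>.comp_of_eq (hφ x hx) rfl
    have hne : q ^ n * (q * x⁻¹) ≠ 0 := by simp [hq₀, hx]
    refine (hhx n).comp_of_eq (analyticAt_inv hne) ?_
    field_simp
    ring
  · have hqx : q * (q * x)⁻¹ = x⁻¹ := by field_simp
    dsimp only
    rw [hqx, qOrbitSum_mul_left hq hf (inv_ne_zero hx), hf_def]
    simp only [inv_inv, sub_add_cancel]

theorem exists_qLogarithm {q : ℂ} (hq : 1 < ‖q‖) :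
    ∃ l : ℂ → ℂ, MeromorphicOn l {x | x ≠ 0} ∧
      (∀ x, x ≠ 0 → (∀ n : ℤ, x ≠ q ^ n) → AnalyticAt ℂ l x) ∧
      ∀ x, x ≠ 0 → x ≠ 1 → l (q * x) = l x + 1 := by
  have hq₀ : q ≠ 0 := norm_pos_iff.mp (one_pos.trans hq)
  -- split `1 = (1 - x)⁻¹ + x / (x - 1)` into a part vanishing at `∞` and one vanishing at `0`
  have ha : ∀ z : ℂ, z ≠ 1 → AnalyticAt ℂ (fun x => (1 - x)⁻¹) z := fun z hz =>
    (analyticAt_const.sub analyticAt_id).inv (sub_ne_zero.mpr hz.symm)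
  have hb : ∀ z : ℂ, z ≠ 1 → AnalyticAt ℂ (fun x => x / (x - 1)) z := fun z hz =>
    analyticAt_id.div (analyticAt_id.sub analyticAt_const) (sub_ne_zero.mpr hz)
  have hbig : (fun x : ℂ => (1 - x)⁻¹) =O[cobounded ℂ] (·⁻¹) := by
    refine IsBigO.of_bound 2 ?_
    filter_upwards [eventually_cobounded_le_norm 2] with x hx
    have h1 : ‖x‖ - 1 ≤ ‖1 - x‖ := by
      simpa using norm_sub_norm_le x 1 |>.trans_eq (norm_sub_rev x 1)
    rw [norm_inv, norm_inv, ← div_eq_mul_inv, inv_le_comm₀ (by linarith) (by positivity), inv_div]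
    linarith
  obtain ⟨ga, hga_mero, hga_an, hga_eq⟩ := exists_qDifference_solution_of_isBigO_inv hq hbig
    ((eventually_cobounded_le_norm 2).mono fun x hx => ha x fun h => by norm_num [h] at hx)
    fun x _ => (MeromorphicAt.const 1 x |>.sub (MeromorphicAt.id x)).inv
  obtain ⟨gb, hgb_mero, hgb_an, hgb_eq⟩ := exists_qDifference_solution_of_analyticAt_zero hq
    (h := fun x => x / (x - 1))
    (fun x _ => (MeromorphicAt.id x).div ((MeromorphicAt.id x).sub (MeromorphicAt.const 1 x)))
    (hb 0 zero_ne_one) (by simp)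
  refine ⟨ga + gb, hga_mero.add hgb_mero, fun x hx hxq => ?_, fun x hx hx1 => ?_⟩
  · refine (hga_an x hx fun n => ha _ fun h => hxq (-n) ?_).add
      (hgb_an x hx fun n => hb _ fun h => hxq (n + 1) ?_)
    · rw [zpow_neg, zpow_natCast]
      exact eq_inv_of_mul_eq_one_right h
    · rw [div_eq_one_iff_eq (pow_ne_zero _ hq₀)] at h
      exact_mod_cast h
  · simp only [Pi.add_apply, hga_eq x hx, hgb_eq x hx]
    have : x - 1 ≠ 0 := sub_ne_zero.mpr hx1
    have : 1 - x ≠ 0 := sub_ne_zero.mpr (Ne.symm hx1)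
    field_simp
    ring

theorem MeromorphicOn.analyticAt_toMeromorphicNFOn {𝕜 E : Type*} [NontriviallyNormedField 𝕜]
    [NormedAddCommGroup E] [NormedSpace 𝕜 E] {f : 𝕜 → E} {U : Set 𝕜}
    (hf : MeromorphicOn f U) {a : 𝕜} (ha : a ∈ U) (h : 0 ≤ meromorphicOrderAt f a) :
    AnalyticAt 𝕜 (toMeromorphicNFOn f U) a :=
  (meromorphicNFOn_toMeromorphicNFOn f U ha).meromorphicOrderAt_nonneg_iff_analyticAt.mp
    (by rwa [meromorphicOrderAt_toMeromorphicNFOn hf ha])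

theorem exists_qDifference_solution {q : ℂ} (hq : 1 < ‖q‖) {F : ℂ → ℂ}
    (hF : MeromorphicOn F {x | x ≠ 0}) {ρ : ℝ} (hρ : 0 < ρ) :
    ∃ y : ℂ → ℂ, MeromorphicOn y {x | x ≠ 0} ∧
      (∀ x, x ≠ 0 → (∀ n : ℤ, x ≠ q ^ n) →
        (∀ n : ℕ, ‖q ^ n * x‖ ≤ ρ → AnalyticAt ℂ F (q ^ n * x)) →
        (∀ n : ℕ, ρ < ‖x / q ^ (n + 1)‖ → AnalyticAt ℂ F (x / q ^ (n + 1))) →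
        AnalyticAt ℂ y x) ∧
      ∀ x, x ≠ 0 → x ≠ 1 → y (q * x) = y x + F x := by
  have hq₀ : q ≠ 0 := norm_pos_iff.mp (one_pos.trans hq)
  obtain ⟨P, Q, hPQ, hPm, hPan, hQan, hPO⟩ := hF.exists_laurent_split hρ
  have hQm : MeromorphicOn Q {x | x ≠ 0} := by
    rw [show Q = F - P by rw [hPQ]; ring]
    exact hF.sub hPm
  obtain ⟨g₁, hg₁m, hg₁an, hg₁eq⟩ := exists_qDifference_solution_of_isBigO_inv hq hPO
    ((eventually_cobounded_le_norm (ρ + 1)).mono fun x hx =>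
      hPan x (by rintro rfl; simp at hx; linarith) (Or.inl (by linarith))) hPm
  -- subtracting `Q 0` (to be solved by a `q`-logarithm) makes `Q` vanish at `0`
  obtain ⟨g₂, hg₂m, hg₂an, hg₂eq⟩ := exists_qDifference_solution_of_analyticAt_zero hq
    (h := fun x => Q x - Q 0) (hQm.sub (MeromorphicOn.const _))
    ((hQan 0 (Or.inl (by simpa using hρ.le))).sub analyticAt_const) (sub_self _)
  obtain ⟨l, hlm, hlan, hleq⟩ := exists_qLogarithm hq
  refine ⟨fun x => g₁ x + g₂ x + Q 0 * l x, (hg₁m.add hg₂m).add ((MeromorphicOn.const _).mul hlm),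
    fun x hx hxq hin hout => ?_, fun x hx hx1 => ?_⟩
  · refine ((hg₁an x hx fun n => ?_).add (hg₂an x hx fun n => ?_)).add
      (analyticAt_const.mul (hlan x hx hxq))
    · refine hPan _ (mul_ne_zero (pow_ne_zero n hq₀) hx) ?_
      by_cases h : ρ < ‖q ^ n * x‖
      exacts [Or.inl h, Or.inr (hin n (not_lt.mp h))]
    · refine (hQan _ ?_).sub analyticAt_const
      by_cases h : ρ < ‖x / q ^ (n + 1)‖
      exacts [Or.inr (hout n h), Or.inl (not_lt.mp h)]
  · simp only [hg₁eq x hx, hg₂eq x hx, hleq x hx hx1, hPQ, Pi.add_apply]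
    ring

/-- If `R` is meromorphic on `ℂ ∖ {0}` with pole set `P` and
`ρ > 0`, then the equation `y(qx) = y(x) + R(x)` has a solution meromorphic on
`ℂ ∖ {0}`, analytic outside the set
`S = q^ℤ ∪ {a qⁿ : a ∈ P, |a| > ρ, n ≥ 1} ∪ {a q⁻ⁿ : a ∈ P, |a| ≤ ρ, n ≥ 0}`. -/
theorem meromorphic_solution_inhomogeneous_shift (q : ℂ) (hq : 1 < ‖q‖)
    (R : ℂ → ℂ) (hR : MeromorphicOn R {x : ℂ | x ≠ 0}) (ρ : ℝ) (hρ : 0 < ρ)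
    (S : Set ℂ)
    (hS : S = {z : ℂ | (∃ n : ℤ, z = q ^ n) ∨
      (∃ a : ℂ, ∃ ha : a ≠ 0, meromorphicOrderAt R a < 0 ∧ ρ < ‖a‖ ∧
        ∃ n : ℕ, 1 ≤ n ∧ z = a * q ^ (n : ℤ)) ∨
      (∃ a : ℂ, ∃ ha : a ≠ 0, meromorphicOrderAt R a < 0 ∧ ‖a‖ ≤ ρ ∧
        ∃ n : ℕ, z = a * q ^ (-(n : ℤ)))}) :
    ∃ y : ℂ → ℂ, MeromorphicOn y {x : ℂ | x ≠ 0} ∧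
      (∀ x : ℂ, x ≠ 0 → x ∉ S → AnalyticAt ℂ y x) ∧
      (∀ x : ℂ, x ≠ 0 → AnalyticAt ℂ R x → AnalyticAt ℂ y x → AnalyticAt ℂ y (q * x) →
        y (q * x) = y x + R x) := by
  have hq₀ : q ≠ 0 := norm_pos_iff.mp (one_pos.trans hq)
  obtain ⟨y, hym, hyan, hyeq⟩ := exists_qDifference_solution hq
    (meromorphicNFOn_toMeromorphicNFOn R _).meromorphicOn hρ
  subst hS
  refine ⟨y, hym, fun x hx hxS => hyan x hx (fun n h => hxS (Or.inl ⟨n, h⟩)) (fun n hn => ?_)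
    (fun n hn => ?_), fun x hx hRx hyx hyqx => ?_⟩
  · have hne : q ^ n * x ≠ 0 := mul_ne_zero (pow_ne_zero n hq₀) hx
    refine hR.analyticAt_toMeromorphicNFOn hne <| not_lt.mp fun hpole =>
      hxS (Or.inr (Or.inr ⟨_, hne, hpole, hn, n, ?_⟩))
    rw [zpow_neg, zpow_natCast]
    field_simp
  · have hne : x / q ^ (n + 1) ≠ 0 := div_ne_zero hx (pow_ne_zero _ hq₀)
    refine hR.analyticAt_toMeromorphicNFOn hne <| not_lt.mp fun hpole =>
      hxS (Or.inr (Or.inl ⟨_, hne, hpole, hn, n + 1, by omega, ?_⟩))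
    rw [zpow_natCast]
    field_simp
  · -- the equation holds near `x` off a discrete set, hence at `x` by continuity
    have hne1 : ∀ᶠ w in 𝓝[≠] x, w ≠ 1 := by
      rcases eq_or_ne x 1 with rfl | h
      exacts [self_mem_nhdsWithin, eventually_ne_nhdsWithin h]
    have heq : (fun w => y (q * w)) =ᶠ[𝓝[≠] x] fun w => y w + R w := by
      filter_upwards [hR.toMeromorphicNFOn_eq_self_on_nhdsNE hx, eventually_ne_nhdsWithin hx,
        hne1] with w hFR hw0 hw1
      rw [hyeq w hw0 hw1, hFR]
    exact ((hyqx.continuousAt.comp (continuous_const_mul q).continuousAt)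
      |>.eventuallyEq_nhds_iff_eventuallyEq_nhdsNE (hyx.continuousAt.add hRx.continuousAt)).mp heq
      |>.eq_of_nhds
end
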